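/- arXiv:math/9810005 — 5 statements merged into one kernel-verified Lean document; each statement's English description precedes it below -/
import Mathlib

section
/- Let $M$ and $N$ be two $d$-by-$m$ matrices of rank $d$ over a field $k$ of characteristic zero. If there exist an invertible $d$-by-$d$ matrix $Q$ and an $m$-by-$m$ invertible monomial matrix $P$ such that $QMP = N$, then the subalgebras $A(M)$ and $A(N)$ of $B = k[x_1,\ldots,x_m]/(x_1^2,\ldots,x_m^2)$ are isomorphic as $k$-algebras. -/
open MvPolynomial

noncomputable section

/-- The ideal generated by the squares of the variables. -/
def sqIdeal (k : Type*) [Field k] (m : ℕ) : Ideal (MvPolynomial (Fin m) k) :=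
  Ideal.span (Set.range fun i => (X i : MvPolynomial (Fin m) k) ^ 2)

/-- `B = k[x_1,...,x_m]/(x_1^2,...,x_m^2)`. -/
abbrev Bq (k : Type*) [Field k] (m : ℕ) := MvPolynomial (Fin m) k ⧸ sqIdeal k m

/-- Quotient map onto `B`. -/
def bmk (k : Type*) [Field k] (m : ℕ) : MvPolynomial (Fin m) k →ₐ[k] Bq k m :=
  Ideal.Quotient.mkₐ k (sqIdeal k m)

/-- The degree-`j` graded piece of `B`, spanned by images of squarefree monomials of degree `j`. -/
def Bgrade (k : Type*) [Field k] (m j : ℕ) : Submodule k (Bq k m) :=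
  Submodule.span k { b | ∃ s : Finset (Fin m), s.card = j ∧ b = bmk k m (∏ i ∈ s, X i) }

/-- The linear form in `B` with coefficient vector `c`. -/
def lform {k : Type*} [Field k] {m : ℕ} (c : Fin m → k) : Bq k m :=
  bmk k m (∑ j, C (c j) * X j)

/-- `A(M)`: the subalgebra of `B` generated by the rows of `M`, viewed as linear forms. -/
def Asub (k : Type*) [Field k] {ι : Type*} [Fintype ι] {m : ℕ} (M : Matrix ι (Fin m) k) :
    Subalgebra k (Bq k m) :=
  Algebra.adjoin k (Set.range fun i => lform (M i))

/-- The degree-`j` graded piece `A_j(M)` of `A(M)`. -/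
def Aj (k : Type*) [Field k] {ι : Type*} [Fintype ι] {m : ℕ} (M : Matrix ι (Fin m) k)
    (j : ℕ) : Submodule k (Bq k m) :=
  (Subalgebra.toSubmodule (Asub k M)) ⊓ Bgrade k m j
/-- A square matrix is monomial if it has exactly one nonzero entry in each row and column. -/
def IsMonomialMatrix {k : Type*} [Field k] {n : Type*} [DecidableEq n] (P : Matrix n n k) : Prop :=
  ∃ (σ : Equiv.Perm n) (c : n → kˣ), ∀ i j, P i j = if j = σ i then (c i : k) else 0

section Aux

variable {k : Type*} [Field k] {m : ℕ}

/-- `lform` as a linear map. -/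
def lformₗ (k : Type*) [Field k] (m : ℕ) : (Fin m → k) →ₗ[k] Bq k m where
  toFun := lform
  map_add' a b := by
    simp only [lform, ← map_add]
    congr 1
    rw [← Finset.sum_add_distrib]
    exact Finset.sum_congr rfl fun j _ => by simp [add_mul]
  map_smul' r a := by
    simp only [lform, RingHom.id_apply, ← map_smul]
    congr 1
    rw [Finset.smul_sum]
    exact Finset.sum_congr rfl fun j _ => by
      simp [MvPolynomial.smul_eq_C_mul, mul_assoc]

lemma Asub_eq_adjoin_span {ι : Type*} [Fintype ι] (M : Matrix ι (Fin m) k) :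
    Asub k M =
      Algebra.adjoin k ((Submodule.span k (Set.range M)).map (lformₗ k m) : Set (Bq k m)) := by
  rw [← Submodule.span_image, Algebra.adjoin_span, Asub]
  congr 1
  show _ = _ '' Set.range (fun i => M i)
  rw [← Set.range_comp]
  rfl

lemma Asub_eq_of_span_eq {ι ι' : Type*} [Fintype ι] [Fintype ι']
    (M : Matrix ι (Fin m) k) (N : Matrix ι' (Fin m) k)
    (h : Submodule.span k (Set.range M) = Submodule.span k (Set.range N)) :
    Asub k M = Asub k N := by
  rw [Asub_eq_adjoin_span, Asub_eq_adjoin_span, h]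

lemma row_mem_span {d d' : ℕ} (Q : Matrix (Fin d) (Fin d') k) (R : Matrix (Fin d') (Fin m) k)
    (i : Fin d) : (Q * R) i ∈ Submodule.span k (Set.range R) := by
  have : (Q * R) i = ∑ j, Q i j • R j := by
    ext l
    simp [Matrix.mul_apply, Finset.sum_apply]
  rw [this]
  exact Submodule.sum_mem _ fun j _ =>
    Submodule.smul_mem _ _ (Submodule.subset_span ⟨j, rfl⟩)

/-- The scaling-permutation algebra endomorphism of the polynomial ring. -/
def scaleHom (σ : Equiv.Perm (Fin m)) (c : Fin m → k) :
    MvPolynomial (Fin m) k →ₐ[k] MvPolynomial (Fin m) k :=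
  aeval fun j => C (c j) * X (σ j)

/-- The scaling-permutation algebra automorphism of the polynomial ring. -/
def scaleEquiv (σ : Equiv.Perm (Fin m)) (c : Fin m → kˣ) :
    MvPolynomial (Fin m) k ≃ₐ[k] MvPolynomial (Fin m) k :=
  AlgEquiv.ofAlgHom (scaleHom σ fun j => (c j : k))
    (scaleHom σ⁻¹ fun j => ((c (σ⁻¹ j))⁻¹ : kˣ))
    (by
      apply MvPolynomial.algHom_ext
      intro j
      rw [AlgHom.comp_apply]
      simp only [scaleHom, aeval_X]
      rw [map_mul, aeval_C, aeval_X, ← mul_assoc]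
      simp [MvPolynomial.algebraMap_eq, ← map_mul,
        inv_mul_cancel₀ ((c (σ⁻¹ j)).ne_zero)])
    (by
      apply MvPolynomial.algHom_ext
      intro j
      rw [AlgHom.comp_apply]
      simp only [scaleHom, aeval_X]
      rw [map_mul, aeval_C, aeval_X, ← mul_assoc]
      simp [MvPolynomial.algebraMap_eq, ← map_mul, Equiv.symm_apply_apply,
        mul_inv_cancel₀ ((c j).ne_zero)])

lemma scaleEquiv_C (σ : Equiv.Perm (Fin m)) (c : Fin m → kˣ) (a : k) :
    scaleEquiv σ c (C a) = C a := by
  simp [scaleEquiv, scaleHom, MvPolynomial.algebraMap_eq]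

lemma scaleEquiv_X (σ : Equiv.Perm (Fin m)) (c : Fin m → kˣ) (j : Fin m) :
    scaleEquiv σ c (X j) = C (c j : k) * X (σ j) := by
  simp [scaleEquiv, scaleHom]

lemma map_sqIdeal (σ : Equiv.Perm (Fin m)) (c : Fin m → kˣ) :
    (sqIdeal k m).map ((scaleEquiv σ c : MvPolynomial (Fin m) k ≃ₐ[k] _) : MvPolynomial (Fin m) k →+* MvPolynomial (Fin m) k) = sqIdeal k m := by
  rw [sqIdeal, Ideal.map_span]
  apply le_antisymm
  · rw [Ideal.span_le]
    rintro _ ⟨_, ⟨i, rfl⟩, rfl⟩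
    have : (scaleEquiv σ c) ((X i : MvPolynomial (Fin m) k) ^ 2)
        = C ((c i : k) ^ 2) * X (σ i) ^ 2 := by
      rw [map_pow, scaleEquiv_X, mul_pow, map_pow]
    rw [RingHom.coe_coe, this]
    exact Ideal.mul_mem_left _ _ (Ideal.subset_span ⟨σ i, rfl⟩)
  · rw [Ideal.span_le]
    rintro _ ⟨i, rfl⟩
    have h1 : (scaleEquiv σ c) ((X (σ⁻¹ i) : MvPolynomial (Fin m) k) ^ 2)
        = C ((c (σ⁻¹ i) : k) ^ 2) * X i ^ 2 := by
      rw [map_pow, scaleEquiv_X, mul_pow, map_pow]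
      simp
    have h2 : (X i : MvPolynomial (Fin m) k) ^ 2
        = C (((c (σ⁻¹ i) : k)) ^ 2)⁻¹ * (scaleEquiv σ c) ((X (σ⁻¹ i)) ^ 2) := by
      rw [h1, ← mul_assoc, ← map_mul, inv_mul_cancel₀ (pow_ne_zero 2 (c (σ⁻¹ i)).ne_zero), map_one, one_mul]
    show (X i : MvPolynomial (Fin m) k) ^ 2 ∈ _
    rw [h2]
    exact Ideal.mul_mem_left _ _
      (Ideal.subset_span (Set.mem_image_of_mem _ ⟨σ⁻¹ i, rfl⟩))

/-- The induced automorphism of `B`. -/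
def scaleEquivB (σ : Equiv.Perm (Fin m)) (c : Fin m → kˣ) : Bq k m ≃ₐ[k] Bq k m :=
  Ideal.quotientEquivAlg (sqIdeal k m) (sqIdeal k m) (scaleEquiv σ c) (map_sqIdeal σ c).symm

lemma scaleEquivB_mk (σ : Equiv.Perm (Fin m)) (c : Fin m → kˣ) (p : MvPolynomial (Fin m) k) :
    scaleEquivB σ c (bmk k m p) = bmk k m (scaleEquiv σ c p) := rfl

lemma scaleEquivB_lform (σ : Equiv.Perm (Fin m)) (c : Fin m → kˣ) (v : Fin m → k) :
    scaleEquivB σ c (lform v) = lform (fun l => v (σ⁻¹ l) * (c (σ⁻¹ l) : k)) := by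
  rw [lform, scaleEquivB_mk, lform]
  congr 1
  rw [map_sum]
  rw [← Equiv.sum_comp σ (fun l => C (v (σ⁻¹ l) * ((c (σ⁻¹ l)) : k)) * X l)]
  refine Finset.sum_congr rfl fun j _ => ?_
  simp only [Equiv.Perm.inv_def, Equiv.symm_apply_apply]
  rw [map_mul, scaleEquiv_X, scaleEquiv_C, map_mul, ← mul_assoc]

end Aux

/-- If `QMP = N` with `Q` invertible and `P` an invertible monomial matrix, then
`A(M) ≅ A(N)` as `k`-algebras. -/
theorem stmt3 (k : Type*) [Field k] [CharZero k] (d m : ℕ)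
    (M N : Matrix (Fin d) (Fin m) k) (hM : M.rank = d) (hN : N.rank = d)
    (Q : Matrix (Fin d) (Fin d) k) (P : Matrix (Fin m) (Fin m) k)
    (hQ : IsUnit Q) (hP : IsMonomialMatrix P) (hQMP : Q * M * P = N) :
    Nonempty (↥(Asub k M) ≃ₐ[k] ↥(Asub k N)) := by
  obtain ⟨σ, c, hPdef⟩ := hP
  set Φ := scaleEquivB (k := k) σ c with hΦ
  -- rows of M*P
  have hrow : ∀ v : Fin m → k, Matrix.vecMul v P = fun l => v (σ⁻¹ l) * (c (σ⁻¹ l) : k) := by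
    intro v
    funext l
    rw [Matrix.vecMul, dotProduct]
    rw [Finset.sum_eq_single (σ⁻¹ l)]
    · rw [hPdef]; simp
    · intro j _ hj
      rw [hPdef]
      have : ¬ (l = σ j) := by
        intro h; exact hj (by simp [h])
      simp [this]
    · simp
  have hMP : ∀ i, (M * P) i = fun l => (M i) (σ⁻¹ l) * (c (σ⁻¹ l) : k) := by
    intro i
    rw [← hrow (M i)]
    ext l
    simp [Matrix.mul_apply, Matrix.vecMul, dotProduct]
  have h1 : (Asub k M).map Φ.toAlgHom = Asub k (M * P) := by
    rw [Asub, AlgHom.map_adjoin, Asub]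
    congr 1
    rw [← Set.range_comp]
    refine congrArg Set.range (funext fun i => ?_)
    show Φ (lform (M i)) = lform ((M * P) i)
    rw [hΦ, scaleEquivB_lform, hMP i]
  have h2 : Asub k (M * P) = Asub k N := by
    refine Asub_eq_of_span_eq _ _ (le_antisymm ?_ ?_)
    · rw [Submodule.span_le]
      rintro _ ⟨i, rfl⟩
      obtain ⟨u, rfl⟩ := hQ
      have hR : M * P = ((↑(u⁻¹) : Matrix (Fin d) (Fin d) k)) *
          ((↑u : Matrix (Fin d) (Fin d) k) * (M * P)) := by
        rw [← Matrix.mul_assoc, Units.inv_mul, Matrix.one_mul]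
      have hN2 : (↑u : Matrix (Fin d) (Fin d) k) * (M * P) = N := by
        rw [← hQMP, Matrix.mul_assoc]
      rw [hR, hN2]
      exact row_mem_span _ _ i
    · rw [Submodule.span_le]
      rintro _ ⟨i, rfl⟩
      rw [← hQMP, Matrix.mul_assoc]
      exact row_mem_span _ _ i
  exact ⟨(Subalgebra.equivMapOfInjective _ Φ.toAlgHom Φ.injective).trans
    (Subalgebra.equivOfEq _ _ (h1.trans h2))⟩
end
end

section
/- Let $M$ be a $d$-by-$m$ matrix of rank $d$ over a field $k$ of characteristic zero. Let $R = k[z_1,\ldots,z_d]$ and let $J(M)$ be the ideal of $R$ generated by $\{p^{1+\nu(pM)} : p \in R_1\}$, where for a linear form $p$ (viewed as a row vector of length $d$), $pM$ is the corresponding linear form in $B_1$ and $\nu(pM)$ is the number of nonzero coefficients of $pM$. Then $A(M) \cong R/J(M)$ as graded $k$-algebras, via $z_i \mapsto$ (the $i$-th row of $M$). -/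
open MvPolynomial

noncomputable section

open Classical in
/-- The ideal `J(M) = (p^{1+ν(pM)} : p ∈ R₁)` of `R = k[z_1,…,z_d]`, where `ν(pM)` is the
number of nonzero coefficients of the linear form `pM ∈ B₁`. -/
def jIdeal (k : Type*) [Field k] {d m : ℕ} (M : Matrix (Fin d) (Fin m) k) :
    Ideal (MvPolynomial (Fin d) k) :=
  Ideal.span { q | ∃ c : Fin d → k,
    q = (∑ i, C (c i) * X i) ^
      (1 + (Finset.univ.filter fun j => (∑ i, c i * M i j) ≠ 0).card) }

namespace Stmt8Aux

variable {k : Type*} [Field k] {d : ℕ}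

/-- linear form with coefficient vector `c` -/
def lin (c : Fin d → k) : MvPolynomial (Fin d) k := ∑ i, C (c i) * X i

def dot (p c : Fin d → k) : k := ∑ i, p i * c i

def Dop (p : Fin d → k) : MvPolynomial (Fin d) k →ₗ[k] MvPolynomial (Fin d) k :=
  ∑ i, p i • ((pderiv i : Derivation k (MvPolynomial (Fin d) k) (MvPolynomial (Fin d) k))
    : MvPolynomial (Fin d) k →ₗ[k] MvPolynomial (Fin d) k)

lemma Dop_apply (p : Fin d → k) (f : MvPolynomial (Fin d) k) :
    Dop p f = ∑ i, p i • pderiv i f := by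
  simp [Dop]

lemma coeff_pderiv (i : Fin d) (f : MvPolynomial (Fin d) k) (s : Fin d →₀ ℕ) :
    coeff s (pderiv i f) = (s i + 1 : ℕ) * coeff (s + Finsupp.single i 1) f := by
  induction f using MvPolynomial.induction_on' with
  | add f g hf hg => simp [hf, hg, mul_add]
  | monomial t a =>
    rw [pderiv_monomial]
    rcases eq_or_ne t (s + Finsupp.single i 1) with rfl | hne
    · rw [coeff_monomial, coeff_monomial, if_pos rfl, if_pos]
      · simp [mul_comm]
      · simp
    · rw [coeff_monomial, coeff_monomial, if_neg hne, mul_zero]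
      split_ifs with h
      · have hti : t i = 0 := by
          by_contra h0
          apply hne
          have h1 : Finsupp.single i 1 ≤ t := by
            rw [Finsupp.single_le_iff]
            omega
          rw [← h, tsub_add_cancel_of_le h1]
        simp [hti]
      · rfl

lemma coeff_Dop (p : Fin d → k) (f : MvPolynomial (Fin d) k) (s : Fin d →₀ ℕ) :
    coeff s (Dop p f) = ∑ i, p i * ((s i + 1 : ℕ) * coeff (s + Finsupp.single i 1) f) := by
  rw [Dop_apply]
  rw [coeff_sum]
  exact Finset.sum_congr rfl fun i _ => by rw [coeff_smul, smul_eq_mul, coeff_pderiv]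

lemma pderiv_comm (i j : Fin d) (f : MvPolynomial (Fin d) k) :
    pderiv i (pderiv j f) = pderiv j (pderiv i f) := by
  ext s
  rw [coeff_pderiv, coeff_pderiv, coeff_pderiv, coeff_pderiv, add_right_comm]
  simp only [Finsupp.add_apply, Finsupp.single_apply]
  rcases eq_or_ne i j with rfl | hij
  · ring
  · rw [if_neg hij, if_neg (Ne.symm hij)]
    push_cast
    ring

lemma Dop_C (p : Fin d → k) (a : k) : Dop p (C a) = 0 := by
  simp [Dop_apply, pderiv_C]

lemma Dop_one (p : Fin d → k) : Dop p (1 : MvPolynomial (Fin d) k) = 0 := by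
  simpa using Dop_C p 1

lemma Dop_mul (p : Fin d → k) (f g : MvPolynomial (Fin d) k) :
    Dop p (f * g) = f * Dop p g + g * Dop p f := by
  simp only [Dop_apply, pderiv_mul, smul_add, Finset.sum_add_distrib, Finset.mul_sum]
  rw [add_comm]
  congr 1 <;> exact Finset.sum_congr rfl fun i _ => by
    rw [mul_smul_comm, mul_comm]

lemma Dop_C_mul (p : Fin d → k) (a : k) (f : MvPolynomial (Fin d) k) :
    Dop p (C a * f) = C a * Dop p f := by
  rw [Dop_mul, Dop_C, mul_zero, add_zero]

lemma Dop_X (p : Fin d → k) (i : Fin d) : Dop p (X i) = C (p i) := by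
  classical
  rw [Dop_apply]
  rw [Finset.sum_eq_single i]
  · rw [pderiv_X_self, smul_eq_C_mul, mul_one]
  · intro j _ hji
    rw [pderiv_X_of_ne (Ne.symm hji), smul_zero]
  · simp

lemma Dop_lin (p c : Fin d → k) : Dop p (lin c) = C (dot p c) := by
  rw [lin, map_sum, dot, map_sum]
  exact Finset.sum_congr rfl fun i _ => by
    rw [Dop_C_mul, Dop_X, ← C_mul, mul_comm]


def ffact (s : Fin d →₀ ℕ) : k := ∏ i, ((s i).factorial : k)

lemma ffact_ne_zero [CharZero k] (s : Fin d →₀ ℕ) : (ffact s : k) ≠ 0 :=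
  Finset.prod_ne_zero_iff.2 fun i _ => Nat.cast_ne_zero.2 (Nat.factorial_ne_zero _)

lemma ffact_add_single (s : Fin d →₀ ℕ) (i : Fin d) :
    (ffact (s + Finsupp.single i 1) : k) = ((s i + 1 : ℕ) : k) * ffact s := by
  classical
  rw [ffact, ffact, ← Finset.mul_prod_erase Finset.univ _ (Finset.mem_univ i),
    ← Finset.mul_prod_erase Finset.univ (fun j => (((s j).factorial : ℕ) : k)) (Finset.mem_univ i),
    ← mul_assoc]
  congr 1
  · simp only [Finsupp.add_apply, Finsupp.single_eq_same, Nat.factorial_succ]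
    push_cast
    ring
  · refine Finset.prod_congr rfl fun j hj => ?_
    simp only [Finsupp.add_apply,
      Finsupp.single_eq_of_ne' (fun h => (Finset.mem_erase.1 hj).1 h.symm), add_zero]

def pair (f g : MvPolynomial (Fin d) k) : k :=
  ∑ s ∈ f.support, coeff s f * coeff s g * ffact s

lemma pair_eq_sum {f g : MvPolynomial (Fin d) k} {A : Finset (Fin d →₀ ℕ)}
    (hA : f.support ⊆ A) : pair f g = ∑ s ∈ A, coeff s f * coeff s g * ffact s := by
  refine Finset.sum_subset hA fun s _ hs => ?_
  rw [notMem_support_iff.1 hs, zero_mul, zero_mul]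

lemma pair_comm (f g : MvPolynomial (Fin d) k) : pair f g = pair g f := by
  rw [pair_eq_sum (Finset.subset_union_left (s₂ := g.support)),
    pair_eq_sum (Finset.subset_union_right (s₁ := f.support)) (g := f)]
  exact Finset.sum_congr rfl fun s _ => by ring

lemma pair_add_right (f g h : MvPolynomial (Fin d) k) :
    pair f (g + h) = pair f g + pair f h := by
  rw [pair, pair, pair, ← Finset.sum_add_distrib]
  exact Finset.sum_congr rfl fun s _ => by rw [coeff_add]; ring

lemma pair_smul_right (f g : MvPolynomial (Fin d) k) (a : k) :
    pair f (a • g) = a * pair f g := by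
  rw [pair, pair, Finset.mul_sum]
  refine Finset.sum_congr rfl fun s _ => ?_
  rw [coeff_smul, smul_eq_mul]
  ring

lemma pair_add_left (f g h : MvPolynomial (Fin d) k) :
    pair (f + g) h = pair f h + pair g h := by
  rw [pair_comm, pair_add_right, pair_comm h f, pair_comm h g]

lemma pair_smul_left (f g : MvPolynomial (Fin d) k) (a : k) :
    pair (a • f) g = a * pair f g := by
  rw [pair_comm, pair_smul_right, pair_comm]

lemma pair_zero_right (f : MvPolynomial (Fin d) k) : pair f 0 = 0 := by
  simp [pair]

lemma pair_zero_left (f : MvPolynomial (Fin d) k) : pair 0 f = 0 := by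
  rw [pair_comm, pair_zero_right]

lemma pair_monomial (s : Fin d →₀ ℕ) (a : k) (g : MvPolynomial (Fin d) k) :
    pair (monomial s a) g = a * coeff s g * ffact s := by
  classical
  rcases eq_or_ne a 0 with rfl | ha
  · rw [map_zero, pair_zero_left, zero_mul, zero_mul]
  · rw [pair, support_monomial, if_neg ha, Finset.sum_singleton, coeff_monomial, if_pos rfl]

lemma pair_sum_left {ι : Type*} (A : Finset ι) (f : ι → MvPolynomial (Fin d) k)
    (g : MvPolynomial (Fin d) k) : pair (∑ i ∈ A, f i) g = ∑ i ∈ A, pair (f i) g := by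
  classical
  induction A using Finset.induction_on with
  | empty => simp [pair_zero_left]
  | insert _ _ hx ih => rw [Finset.sum_insert hx, Finset.sum_insert hx, pair_add_left, ih]

lemma eq_zero_of_pair (g : MvPolynomial (Fin d) k) [CharZero k]
    (h : ∀ s : Fin d →₀ ℕ, pair (monomial s (1 : k)) g = 0) : g = 0 := by
  ext s
  have hs := h s
  rw [pair_monomial, one_mul] at hs
  rcases mul_eq_zero.1 hs with h1 | h1
  · rw [h1, coeff_zero]
  · exact absurd h1 (ffact_ne_zero s)

lemma pair_lin_mul (p : Fin d → k) (f g : MvPolynomial (Fin d) k) :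
    pair (lin p * f) g = pair f (Dop p g) := by
  induction f using MvPolynomial.induction_on' with
  | add f1 f2 h1 h2 => rw [mul_add, pair_add_left, pair_add_left, h1, h2]
  | monomial s a =>
    have hterm : ∀ i : Fin d, C (p i) * X i * (monomial s a : MvPolynomial (Fin d) k)
        = monomial (s + Finsupp.single i 1) (p i * a) := by
      intro i
      have hX : (X i : MvPolynomial (Fin d) k) = monomial (Finsupp.single i 1) 1 := rfl
      rw [hX, C_apply, monomial_mul, monomial_mul, zero_add, mul_one, add_comm]
    rw [lin, Finset.sum_mul, pair_sum_left, pair_monomial]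
    rw [coeff_Dop]
    rw [Finset.mul_sum, Finset.sum_mul]
    refine Finset.sum_congr rfl fun i _ => ?_
    rw [hterm, pair_monomial, ffact_add_single]
    ring

lemma pair_one_left (g : MvPolynomial (Fin d) k) : pair 1 g = coeff 0 g := by
  have h1 : (1 : MvPolynomial (Fin d) k) = monomial 0 1 := by
    rw [monomial_zero']
    exact (C_1).symm
  rw [h1, pair_monomial, one_mul, ffact]
  simp

lemma pair_mul_pow (p : Fin d → k) (f g : MvPolynomial (Fin d) k) (r : ℕ) :
    pair (f * lin p ^ r) g = pair f ((Dop p ^ r) g) := by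
  induction r generalizing g with
  | zero => simp
  | succ r ih =>
    rw [pow_succ, ← mul_assoc, mul_comm (f * lin p ^ r) (lin p), pair_lin_mul, ih]
    congr 1

lemma pair_eq_zero_of_isHomogeneous {f g : MvPolynomial (Fin d) k} {a b : ℕ}
    (hf : f.IsHomogeneous a) (hg : g.IsHomogeneous b) (hab : a ≠ b) : pair f g = 0 := by
  rw [pair]
  refine Finset.sum_eq_zero fun s hs => ?_
  have hdeg : s.degree = a := by
    by_contra hne
    exact (mem_support_iff.1 hs) (hf.coeff_eq_zero hne)
  rw [hg.coeff_eq_zero (hdeg ▸ hab), mul_zero, zero_mul]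


lemma lin_isHomogeneous (c : Fin d → k) : (lin c).IsHomogeneous 1 :=
  IsHomogeneous.sum _ _ _ fun i _ => isHomogeneous_C_mul_X _ _

lemma prod_lin_isHomogeneous {m : ℕ} (w : Fin m → Fin d → k) (S : Finset (Fin m)) :
    (∏ j ∈ S, lin (w j)).IsHomogeneous S.card := by
  have := IsHomogeneous.prod S (fun j => lin (w j)) (fun _ => 1)
    (fun j _ => lin_isHomogeneous _)
  simpa using this

lemma coeff_lin (c : Fin d → k) (i : Fin d) :
    coeff (Finsupp.single i 1) (lin c) = c i := by
  classical
  have hlin : lin c = ∑ i', monomial (Finsupp.single i' 1) (c i') := by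
    refine Finset.sum_congr rfl fun i' _ => ?_
    have hX : (X i' : MvPolynomial (Fin d) k) = monomial (Finsupp.single i' 1) 1 := rfl
    rw [hX, C_apply, monomial_mul, zero_add, mul_one]
  rw [hlin, coeff_sum]
  rw [Finset.sum_eq_single i]
  · rw [coeff_monomial, if_pos rfl]
  · intro j _ hji
    rw [coeff_monomial, if_neg]
    exact fun h => hji (Finsupp.single_left_injective one_ne_zero h)
  · simp

lemma lin_ne_zero {v : Fin d → k} (hv : v ≠ 0) : lin v ≠ 0 := by
  obtain ⟨i, hi⟩ := Function.ne_iff.1 hv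
  intro h
  apply hi
  have := coeff_lin v i
  rw [h, coeff_zero] at this
  rw [← this]
  rfl

lemma lin_add (c c' : Fin d → k) : lin (c + c') = lin c + lin c' := by
  rw [lin, lin, lin, ← Finset.sum_add_distrib]
  refine Finset.sum_congr rfl fun i _ => ?_
  rw [Pi.add_apply, map_add, add_mul]

lemma lin_smul (a : k) (c : Fin d → k) : lin (a • c) = C a * lin c := by
  rw [lin, lin, Finset.mul_sum]
  refine Finset.sum_congr rfl fun i _ => ?_
  rw [Pi.smul_apply, smul_eq_mul, map_mul, mul_assoc]

lemma Dop_prod (p : Fin d → k) {m : ℕ} (S : Finset (Fin m)) (f : Fin m → MvPolynomial (Fin d) k) :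
    Dop p (∏ j ∈ S, f j) = ∑ j ∈ S, Dop p (f j) * ∏ l ∈ S.erase j, f l := by
  classical
  induction S using Finset.induction_on with
  | empty => simp [Dop_one]
  | @insert a S ha ih =>
    rw [Finset.prod_insert ha, Dop_mul, ih, Finset.sum_insert ha, Finset.erase_insert ha]
    rw [Finset.mul_sum, add_comm]
    congr 1
    · exact mul_comm _ _
    refine Finset.sum_congr rfl fun j hj => ?_
    have hja : j ≠ a := fun h => ha (h ▸ hj)
    rw [Finset.erase_insert_of_ne (Ne.symm hja), Finset.prod_insert (fun h => ha (Finset.mem_of_mem_erase h))]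
    ring

lemma Dop_pow_C_mul (p : Fin d → k) (a : k) (f : MvPolynomial (Fin d) k) (r : ℕ) :
    (Dop p ^ r) (C a * f) = C a * (Dop p ^ r) f := by
  induction r generalizing f with
  | zero => simp
  | succ r ih =>
    rw [pow_succ, Module.End.mul_apply, Module.End.mul_apply, Dop_C_mul, ih]

lemma Dop_pow_zero_mono (p : Fin d → k) {f : MvPolynomial (Fin d) k} {r r' : ℕ}
    (h : (Dop p ^ r) f = 0) (hr : r ≤ r') : (Dop p ^ r') f = 0 := by
  obtain ⟨t, rfl⟩ := Nat.exists_eq_add_of_le hr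
  rw [add_comm, pow_add, Module.End.mul_apply, h, map_zero]

open Classical in
lemma Dop_pow_prod_eq_zero (p : Fin d → k) {m : ℕ} (w : Fin m → Fin d → k) (t : ℕ) :
    ∀ S : Finset (Fin m), ∀ _ : (S.filter fun j => dot p (w j) ≠ 0).card ≤ t,
      (Dop p ^ (t + 1)) (∏ j ∈ S, lin (w j)) = 0 := by
  classical
  induction t with
  | zero =>
    intro S hS
    rw [pow_one, Dop_prod]
    refine Finset.sum_eq_zero fun j hj => ?_
    have h0 : dot p (w j) = 0 := by
      by_contra h
      have hmem : j ∈ S.filter fun j => dot p (w j) ≠ 0 := Finset.mem_filter.2 ⟨hj, h⟩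
      have := Finset.card_pos.2 ⟨j, hmem⟩
      omega
    rw [Dop_lin, h0, map_zero, zero_mul]
  | succ t ih =>
    intro S hS
    rw [pow_succ, Module.End.mul_apply, Dop_prod, map_sum]
    refine Finset.sum_eq_zero fun j hj => ?_
    rw [Dop_lin]
    rcases eq_or_ne (dot p (w j)) 0 with h0 | h0
    · rw [h0, map_zero, zero_mul, map_zero]
    · rw [Dop_pow_C_mul, ih (S.erase j) ?_, mul_zero]
      have hsub : ((S.erase j).filter fun l => dot p (w l) ≠ 0)
          ⊆ ((S.filter fun l => dot p (w l) ≠ 0).erase j) := by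
        intro l hl
        rw [Finset.mem_filter, Finset.mem_erase] at hl
        rw [Finset.mem_erase, Finset.mem_filter]
        exact ⟨hl.1.1, hl.1.2, hl.2⟩
      have hjf : j ∈ S.filter fun l => dot p (w l) ≠ 0 := Finset.mem_filter.2 ⟨hj, h0⟩
      have := Finset.card_le_card hsub
      have := Finset.card_erase_of_mem hjf
      omega

open Classical in
def nuL {m : ℕ} (w : Fin m → Fin d → k) (p : Fin d → k) : ℕ :=
  (Finset.univ.filter fun j => dot p (w j) ≠ 0).card

def prodSet {m : ℕ} (w : Fin m → Fin d → k) : Set (MvPolynomial (Fin d) k) :=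
  {f | ∃ S : Finset (Fin m), f = ∏ j ∈ S, lin (w j)}

def spanP {m : ℕ} (w : Fin m → Fin d → k) : Submodule k (MvPolynomial (Fin d) k) :=
  Submodule.span k (prodSet w)

lemma Dop_pow_prodSet (p : Fin d → k) {m : ℕ} (w : Fin m → Fin d → k) {r : ℕ}
    (hr : 1 + nuL w p ≤ r) {u : MvPolynomial (Fin d) k} (hu : u ∈ spanP w) :
    (Dop p ^ r) u = 0 := by
  classical
  have : spanP w ≤ LinearMap.ker (Dop p ^ r) := by
    rw [spanP, Submodule.span_le]
    rintro _ ⟨S, rfl⟩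
    rw [SetLike.mem_coe, LinearMap.mem_ker]
    refine Dop_pow_zero_mono p (r := nuL w p + 1) ?_ (by omega)
    refine Dop_pow_prod_eq_zero p w (nuL w p) S ?_
    rw [nuL]
    convert Finset.card_le_card (Finset.filter_subset_filter _ (Finset.subset_univ S)) using 2
  exact LinearMap.mem_ker.1 (this hu)

lemma degree_fintype (t : Fin d →₀ ℕ) : t.degree = ∑ i, t i := by
  rw [Finsupp.degree]
  exact Finset.sum_subset (Finset.subset_univ _) fun i _ hi => Finsupp.notMem_support_iff.1 hi

lemma degree_add_single (s : Fin d →₀ ℕ) (i : Fin d) :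
    (s + Finsupp.single i 1).degree = s.degree + 1 := by
  classical
  rw [degree_fintype, degree_fintype]
  simp [Finsupp.add_apply, Finsupp.single_apply, Finset.sum_add_distrib, Finset.sum_ite_eq']

lemma totalDegree_Dop_lt (p : Fin d → k) (f : MvPolynomial (Fin d) k) (hf : Dop p f ≠ 0) :
    (Dop p f).totalDegree < f.totalDegree := by
  classical
  have key : ∀ s ∈ (Dop p f).support, (s.sum fun _ e => e) + 1 ≤ f.totalDegree := by
    intro s hs
    have hcoeff : coeff s (Dop p f) ≠ 0 := mem_support_iff.1 hs
    rw [coeff_Dop] at hcoeff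
    obtain ⟨i, -, hi⟩ := Finset.exists_ne_zero_of_sum_ne_zero hcoeff
    have hci : coeff (s + Finsupp.single i 1) f ≠ 0 := by
      intro h
      rw [h, mul_zero, mul_zero] at hi
      exact hi rfl
    have hle := le_totalDegree (mem_support_iff.2 hci)
    have hdeg : ((s + Finsupp.single i 1).sum fun _ e => e) = (s.sum fun _ e => e) + 1 := by
      have := degree_add_single s i
      exact this
    omega
  have hne : (Dop p f).support.Nonempty := support_nonempty.2 hf
  obtain ⟨s0, hs0⟩ := hne
  have h1 : 1 ≤ f.totalDegree := by
    have := key s0 hs0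
    omega
  rw [totalDegree]
  refine (Finset.sup_lt_iff (by simpa using (show 0 < f.totalDegree by omega))).2 ?_
  intro s hs
  have := key s hs
  omega

lemma Dop_pow_eq_zero_of_totalDegree_lt (p : Fin d → k) (f : MvPolynomial (Fin d) k) (r : ℕ)
    (h : f.totalDegree < r) : (Dop p ^ r) f = 0 := by
  induction r generalizing f with
  | zero => omega
  | succ r ih =>
    rw [pow_succ, Module.End.mul_apply]
    rcases eq_or_ne (Dop p f) 0 with h0 | h0
    · rw [h0, map_zero]
    · exact ih _ (by have := totalDegree_Dop_lt p f h0; omega)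


lemma dot_zero_right (p : Fin d → k) : dot p 0 = 0 := by
  simp [dot]

lemma dot_single_left (i : Fin d) (c : Fin d → k) : dot (Pi.single i (1:k)) c = c i := by
  classical
  rw [dot, Finset.sum_eq_single i]
  · rw [Pi.single_eq_same, one_mul]
  · intro j _ hji
    rw [Pi.single_eq_of_ne hji, zero_mul]
  · simp

lemma dot_update (p : Fin d → k) (i0 : Fin d) (a : k) (c : Fin d → k) :
    dot (Function.update p i0 (p i0 - a)) c = dot p c - a * c i0 := by
  classical
  rw [dot, dot]
  rw [show ∑ i, Function.update p i0 (p i0 - a) i * c i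
      = ∑ i, (p i * c i - (if i = i0 then a * c i else 0)) from
    Finset.sum_congr rfl fun i _ => by
      by_cases hi : i = i0
      · subst hi; rw [Function.update_self, if_pos rfl]; ring
      · rw [Function.update_of_ne hi, if_neg hi, sub_zero]]
  rw [Finset.sum_sub_distrib, Finset.sum_ite_eq' Finset.univ i0 (fun i => a * c i)]
  simp

lemma dot_sub_smul_right (p : Fin d → k) (c : Fin d → k) (b : k) (v : Fin d → k) :
    dot p (c - b • v) = dot p c - b * dot p v := by
  rw [dot, dot, dot, Finset.mul_sum, ← Finset.sum_sub_distrib]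
  refine Finset.sum_congr rfl fun i _ => ?_
  simp only [Pi.sub_apply, Pi.smul_apply, smul_eq_mul]
  ring

lemma dot_single_right (p : Fin d → k) (i0 : Fin d) (a : k) :
    dot p (Pi.single i0 a) = p i0 * a := by
  classical
  rw [dot, Finset.sum_eq_single i0]
  · rw [Pi.single_eq_same]
  · intro j _ hji
    rw [Pi.single_eq_of_ne hji, mul_zero]
  · simp

lemma Dop_single_apply (i : Fin d) (f : MvPolynomial (Fin d) k) :
    Dop (Pi.single i (1:k)) f = pderiv i f := by
  classical
  rw [Dop_apply, Finset.sum_eq_single i]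
  · rw [Pi.single_eq_same, one_smul]
  · intro j _ hji
    rw [Pi.single_eq_of_ne hji, zero_smul]
  · simp

lemma pderiv_lin (i : Fin d) (c : Fin d → k) : pderiv i (lin c) = C (c i) := by
  rw [← Dop_single_apply, Dop_lin, dot_single_left]

lemma Dop_update (p : Fin d → k) (i0 : Fin d) (a : k) (f : MvPolynomial (Fin d) k) :
    Dop (Function.update p i0 (p i0 - a)) f = Dop p f - a • pderiv i0 f := by
  classical
  rw [Dop_apply, Dop_apply]
  rw [show ∑ i, Function.update p i0 (p i0 - a) i • pderiv i f
      = ∑ i, (p i • pderiv i f - (if i = i0 then a • pderiv i0 f else 0)) from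
    Finset.sum_congr rfl fun i _ => by
      by_cases hi : i = i0
      · subst hi; rw [Function.update_self, if_pos rfl, sub_smul]
      · rw [Function.update_of_ne hi, if_neg hi, sub_zero]]
  rw [Finset.sum_sub_distrib, Finset.sum_ite_eq' Finset.univ i0 (fun _ => a • pderiv i0 f)]
  simp

lemma pderiv_Dop_comm (i : Fin d) (p : Fin d → k) (f : MvPolynomial (Fin d) k) :
    pderiv i (Dop p f) = Dop p (pderiv i f) := by
  rw [Dop_apply, Dop_apply, map_sum]
  refine Finset.sum_congr rfl fun j _ => ?_
  rw [Derivation.map_smul, pderiv_comm]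

lemma eq_C_of_pderiv [CharZero k] (h : MvPolynomial (Fin d) k)
    (hp : ∀ i, pderiv i h = 0) : h = C (coeff 0 h) := by
  ext s
  rcases eq_or_ne s 0 with rfl | hs
  · rw [coeff_C, if_pos rfl]
  · obtain ⟨i, hi⟩ : ∃ i, s i ≠ 0 := by
      by_contra hc
      push_neg at hc
      exact hs (Finsupp.ext fun i => hc i)
    have hle : Finsupp.single i 1 ≤ s := by
      rw [Finsupp.single_le_iff]
      omega
    set t := s - Finsupp.single i 1 with ht
    have heq := coeff_pderiv i h t
    rw [hp i, coeff_zero, ht, tsub_add_cancel_of_le hle] at heq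
    have hcast : ((t i + 1 : ℕ) : k) ≠ 0 := Nat.cast_ne_zero.2 (Nat.succ_ne_zero _)
    have hz := (mul_eq_zero.1 heq.symm).resolve_left hcast
    rw [hz, coeff_C, if_neg (fun hh => hs hh.symm)]

lemma Dop_pow_lin_mul (p v : Fin d → k) (f : MvPolynomial (Fin d) k) (r : ℕ) :
    (Dop p ^ (r + 1)) (lin v * f)
      = lin v * (Dop p ^ (r + 1)) f + (r + 1) • (C (dot p v) * (Dop p ^ r) f) := by
  induction r generalizing f with
  | zero =>
    rw [pow_one, pow_zero, Module.End.one_apply, Dop_mul, Dop_lin]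
    have h1 : (0 + 1) • (C (dot p v) * f) = C (dot p v) * f := one_smul ℕ _
    rw [h1, mul_comm f]
  | succ r ih =>
    have e0 : (Dop p ^ (r + 1 + 1)) (lin v * f) = Dop p ((Dop p ^ (r+1)) (lin v * f)) := by
      rw [pow_succ', Module.End.mul_apply]
    rw [e0, ih, map_add, Dop_mul, Dop_lin, map_nsmul, Dop_C_mul]
    have e1 : (Dop p ^ (r + 1 + 1)) f = Dop p ((Dop p ^ (r + 1)) f) := by
      rw [pow_succ', Module.End.mul_apply]
    have e2 : (Dop p ^ (r + 1)) f = Dop p ((Dop p ^ r) f) := by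
      rw [pow_succ', Module.End.mul_apply]
    rw [e1, e2, succ_nsmul]
    rw [mul_comm (Dop p ((Dop p ^ r) f)) (C (dot p v))]
    rw [add_assoc]
    congr 1
    rw [succ_nsmul, succ_nsmul]
    abel


lemma lin_sub (c c' : Fin d → k) : lin (c - c') = lin c - lin c' := by
  rw [lin, lin, lin, ← Finset.sum_sub_distrib]
  refine Finset.sum_congr rfl fun i _ => ?_
  rw [Pi.sub_apply, map_sub, sub_mul]

lemma lin_single (i0 : Fin d) : lin (Pi.single i0 (1:k)) = X i0 := by
  classical
  rw [lin, Finset.sum_eq_single i0]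
  · rw [Pi.single_eq_same, map_one, one_mul]
  · intro j _ hji
    rw [Pi.single_eq_of_ne hji, map_zero, zero_mul]
  · simp

open Classical in
lemma nuL_zero (w : Fin 0 → Fin d → k) (p : Fin d → k) : nuL w p = 0 := by
  rw [nuL]
  simp

open Classical in
lemma nuL_succ {m : ℕ} (w : Fin (m+1) → Fin d → k) (p : Fin d → k) :
    nuL w p = (if dot p (w 0) ≠ 0 then 1 else 0) + nuL (fun j => w (Fin.succ j)) p := by
  classical
  rw [nuL, nuL]
  have := Fin.card_filter_univ_succ' (fun x => dot p (w x) ≠ 0)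
  convert this using 2

lemma nuL_congr {m : ℕ} (w u : Fin m → Fin d → k) (p q : Fin d → k)
    (h : ∀ j, (dot p (w j) ≠ 0 ↔ dot q (u j) ≠ 0)) : nuL w p = nuL u q := by
  classical
  rw [nuL, nuL]
  congr 1
  apply Finset.filter_congr
  intro j _
  rw [h j]

lemma prodSet_one {m : ℕ} (w : Fin m → Fin d → k) :
    (1 : MvPolynomial (Fin d) k) ∈ prodSet w :=
  ⟨∅, (Finset.prod_empty).symm⟩

lemma spanP_tail_le {m : ℕ} (w : Fin (m+1) → Fin d → k) :
    spanP (fun j => w (Fin.succ j)) ≤ spanP w := by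
  rw [spanP, Submodule.span_le]
  rintro _ ⟨S, rfl⟩
  refine Submodule.subset_span ⟨S.map (Fin.succEmb m), ?_⟩
  rw [Finset.prod_map]
  rfl

lemma mul_lin_mem {m : ℕ} (w : Fin (m+1) → Fin d → k) {g : MvPolynomial (Fin d) k}
    (hg : g ∈ spanP (fun j => w (Fin.succ j))) : lin (w 0) * g ∈ spanP w := by
  induction hg using Submodule.span_induction with
  | mem x hx =>
    obtain ⟨S, rfl⟩ := hx
    have h0 : (0 : Fin (m+1)) ∉ S.map (Fin.succEmb m) := by
      intro hmem
      obtain ⟨j, -, hj⟩ := Finset.mem_map.1 hmem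
      exact Fin.succ_ne_zero j hj
    refine Submodule.subset_span ⟨Finset.cons 0 (S.map (Fin.succEmb m)) h0, ?_⟩
    rw [Finset.prod_cons, Finset.prod_map]
    rfl
  | zero => rw [mul_zero]; exact zero_mem _
  | add x y hx hy ihx ihy => rw [mul_add]; exact add_mem ihx ihy
  | smul a x hx ih => rw [mul_smul_comm]; exact Submodule.smul_mem _ _ ih

lemma lift_spanP {m : ℕ} (w' wc : Fin m → Fin d → k) (v : Fin d → k)
    (hcong : ∀ j, ∃ b : k, wc j = w' j - b • v) :
    ∀ u ∈ spanP wc, ∃ u' ∈ spanP w', u - u' ∈ Ideal.span {lin v} := by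
  intro u hu
  induction hu using Submodule.span_induction with
  | mem x hx =>
    obtain ⟨S, rfl⟩ := hx
    refine ⟨∏ j ∈ S, lin (w' j), Submodule.subset_span ⟨S, rfl⟩, ?_⟩
    rw [← Ideal.Quotient.eq]
    rw [map_prod, map_prod]
    refine Finset.prod_congr rfl fun j _ => ?_
    rw [Ideal.Quotient.eq]
    obtain ⟨b, hb⟩ := hcong j
    rw [← lin_sub, hb]
    have : w' j - b • v - w' j = (-b) • v := by
      ext i
      simp only [Pi.sub_apply, Pi.smul_apply, smul_eq_mul, Pi.neg_apply, neg_mul]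
      ring
    rw [this, lin_smul]
    exact Ideal.mul_mem_left _ _ (Ideal.subset_span rfl)
  | zero => exact ⟨0, zero_mem _, by simp⟩
  | add x y hx hy ihx ihy =>
    obtain ⟨ux, hux, hdx⟩ := ihx
    obtain ⟨uy, huy, hdy⟩ := ihy
    refine ⟨ux + uy, add_mem hux huy, ?_⟩
    have : x + y - (ux + uy) = (x - ux) + (y - uy) := by ring
    rw [this]
    exact add_mem hdx hdy
  | smul a x hx ih =>
    obtain ⟨ux, hux, hdx⟩ := ih
    refine ⟨a • ux, Submodule.smul_mem _ _ hux, ?_⟩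
    have : a • x - a • ux = a • (x - ux) := by rw [smul_sub]
    rw [this, smul_eq_C_mul]
    exact Ideal.mul_mem_left _ _ hdx

section Theta

variable (v : Fin d → k) (i0 : Fin d)

def vbar : Fin d → k := Pi.single i0 (1:k) - (v i0)⁻¹ • v

def theta : Fin d → MvPolynomial (Fin d) k :=
  fun i => if i = i0 then lin (vbar v i0) else X i

def Tmap : MvPolynomial (Fin d) k →ₐ[k] MvPolynomial (Fin d) k := aeval (theta v i0)

lemma dot_vbar (p : Fin d → k) : dot p (vbar v i0) = p i0 - (v i0)⁻¹ * dot p v := by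
  rw [vbar, dot_sub_smul_right, dot_single_right, mul_one]

lemma vbar_i0 (hv : v i0 ≠ 0) : vbar v i0 i0 = 0 := by
  rw [vbar]
  simp only [Pi.sub_apply, Pi.smul_apply, Pi.single_eq_same, smul_eq_mul]
  rw [inv_mul_cancel₀ hv, sub_self]

lemma pderiv_i0_Tmap (hv : v i0 ≠ 0) (q : MvPolynomial (Fin d) k) :
    pderiv i0 (Tmap v i0 q) = 0 := by
  induction q using MvPolynomial.induction_on with
  | C a => rw [Tmap, aeval_C, algebraMap_eq, pderiv_C]
  | add f g hf hg => rw [map_add, map_add, hf, hg, add_zero]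
  | mul_X f n hf =>
    rw [map_mul, pderiv_mul, hf, zero_mul, zero_add]
    have : pderiv i0 (Tmap v i0 (X n)) = 0 := by
      rw [Tmap, aeval_X, theta]
      by_cases hn : n = i0
      · rw [if_pos hn, pderiv_lin, vbar_i0 v i0 hv, map_zero]
      · rw [if_neg hn, pderiv_X_of_ne hn]
    rw [this, mul_zero]

lemma Dop_theta (p : Fin d → k) (hp : dot p v = 0) (n : Fin d) :
    Dop p (theta v i0 n) = C (p n) := by
  rw [theta]
  by_cases hn : n = i0
  · rw [if_pos hn, Dop_lin, dot_vbar, hp, mul_zero, sub_zero, hn]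
  · rw [if_neg hn, Dop_X]

set_option maxHeartbeats 1000000 in
lemma Tmap_Dop_comm (p : Fin d → k) (hp : dot p v = 0) (q : MvPolynomial (Fin d) k) :
    Dop p (Tmap v i0 q) = Tmap v i0 (Dop p q) := by
  induction q using MvPolynomial.induction_on with
  | C a => rw [Tmap, aeval_C, algebraMap_eq, Dop_C, map_zero]
  | add f g hf hg =>
    rw [map_add, map_add, hf, hg, ← map_add, map_add (Dop p) f g]
  | mul_X f n hf =>
    have hth : Tmap v i0 (X n) = theta v i0 n := by rw [Tmap, aeval_X]
    have hC : Tmap v i0 (C (p n)) = C (p n) := by rw [Tmap, aeval_C, algebraMap_eq]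
    calc Dop p (Tmap v i0 (f * X n)) = Dop p (Tmap v i0 f * theta v i0 n) := by
          rw [map_mul, hth]
      _ = Tmap v i0 f * C (p n) + theta v i0 n * Tmap v i0 (Dop p f) := by
          rw [Dop_mul, Dop_theta v i0 p hp, hf]
      _ = Tmap v i0 (f * C (p n) + X n * Dop p f) := by
          rw [map_add, map_mul, map_mul, hth, hC]
      _ = Tmap v i0 (Dop p (f * X n)) := by
          rw [Dop_mul, Dop_X]

lemma Tmap_Dop_pow (p : Fin d → k) (hp : dot p v = 0) (r : ℕ) (q : MvPolynomial (Fin d) k) :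
    (Dop p ^ r) (Tmap v i0 q) = Tmap v i0 ((Dop p ^ r) q) := by
  induction r generalizing q with
  | zero => simp
  | succ r ih =>
    rw [pow_succ, Module.End.mul_apply, Module.End.mul_apply, Tmap_Dop_comm v i0 p hp, ih]

lemma Tmap_mod (hv : v i0 ≠ 0) (q : MvPolynomial (Fin d) k) :
    q - Tmap v i0 q ∈ Ideal.span {lin v} := by
  set I := Ideal.span {lin v} with hI
  have hcomp : (Ideal.Quotient.mkₐ k I).comp (Tmap v i0) = Ideal.Quotient.mkₐ k I := by
    apply MvPolynomial.algHom_ext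
    intro i
    rw [AlgHom.comp_apply, Tmap, aeval_X, theta]
    by_cases hn : i = i0
    · subst hn
      rw [if_pos rfl]
      rw [Ideal.Quotient.mkₐ_eq_mk, Ideal.Quotient.eq]
      rw [vbar, lin_sub, lin_single, lin_smul]
      have : X i - C (v i)⁻¹ * lin v - X i = -(C (v i)⁻¹ * lin v) := by ring
      rw [this]
      exact neg_mem (Ideal.mul_mem_left _ _ (Ideal.subset_span rfl))
    · rw [if_neg hn]
  have hq := DFunLike.congr_fun hcomp q
  rw [AlgHom.comp_apply] at hq
  have hq' : Ideal.Quotient.mk I ((Tmap v i0) q) = Ideal.Quotient.mk I q := hq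
  exact (Ideal.Quotient.eq).1 hq'.symm

end Theta

lemma Dop_pow_update (p : Fin d → k) (i0 : Fin d) (a : k) (r : ℕ)
    (f : MvPolynomial (Fin d) k) (hf : pderiv i0 f = 0) :
    (Dop p ^ r) f = (Dop (Function.update p i0 (p i0 - a)) ^ r) f := by
  induction r generalizing f with
  | zero => simp
  | succ r ih =>
    rw [pow_succ, Module.End.mul_apply, pow_succ, Module.End.mul_apply]
    have h1 : Dop (Function.update p i0 (p i0 - a)) f = Dop p f := by
      rw [Dop_update, hf, smul_zero, sub_zero]
    rw [h1]
    have h2 : pderiv i0 (Dop p f) = 0 := by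
      rw [pderiv_Dop_comm, hf, map_zero]
    exact ih (Dop p f) h2


theorem main_induction [CharZero k] (m : ℕ) :
    ∀ (w : Fin m → Fin d → k) (h : MvPolynomial (Fin d) k),
      (∀ p : Fin d → k, (Dop p ^ (1 + nuL w p)) h = 0) → h ∈ spanP w := by
  induction m with
  | zero =>
    intro w h H
    have hpd : ∀ i, pderiv i h = 0 := by
      intro i
      have h1 := H (Pi.single i 1)
      have he : 1 + nuL w (Pi.single i (1:k)) = 1 := by rw [nuL_zero]
      rw [he, pow_one, Dop_single_apply] at h1
      exact h1
    rw [eq_C_of_pderiv h hpd]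
    have hsm : (C (coeff 0 h) : MvPolynomial (Fin d) k) = (coeff 0 h) • 1 := by
      rw [smul_eq_C_mul, mul_one]
    rw [hsm]
    exact Submodule.smul_mem _ _ (Submodule.subset_span (prodSet_one w))
  | succ m ih =>
    intro w h H
    by_cases hv : w 0 = 0
    · have hnu : ∀ p : Fin d → k, nuL w p = nuL (fun j => w (Fin.succ j)) p := by
        intro p
        rw [nuL_succ, hv, dot_zero_right]
        simp
      refine spanP_tail_le w (ih _ h fun p => ?_)
      rw [← hnu p]
      exact H p
    · obtain ⟨i0, hi0⟩ : ∃ i0, w 0 i0 ≠ 0 := Function.ne_iff.1 hv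
      set v : Fin d → k := w 0 with hvdef
      set w' : Fin m → Fin d → k := fun j => w (Fin.succ j) with hw'def
      set wc : Fin m → Fin d → k := fun j => w' j - (w' j i0 / v i0) • v with hwcdef
      have hvne : v ≠ 0 := hv
      have hwci0 : ∀ j, wc j i0 = 0 := by
        intro j
        rw [hwcdef]
        simp only [Pi.sub_apply, Pi.smul_apply, smul_eq_mul]
        rw [div_mul_cancel₀ _ hi0, sub_self]
      set h0 : MvPolynomial (Fin d) k := Tmap v i0 h with hh0def
      have hpd0 : pderiv i0 h0 = 0 := pderiv_i0_Tmap v i0 hi0 h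
      have Hc : ∀ p : Fin d → k, (Dop p ^ (1 + nuL wc p)) h0 = 0 := by
        intro p
        set a : k := dot p v / v i0 with hadef
        set pb : Fin d → k := Function.update p i0 (p i0 - a) with hpbdef
        have hpbv : dot pb v = 0 := by
          rw [hpbdef, dot_update, hadef, div_mul_cancel₀ _ hi0, sub_self]
        have hpbwc : ∀ j, dot pb (wc j) = dot p (wc j) := by
          intro j
          rw [hpbdef, dot_update, hwci0 j, mul_zero, sub_zero]
        have hpbw' : ∀ j, dot pb (w' j) = dot p (wc j) := by
          intro j
          have h1 : dot pb (wc j) = dot pb (w' j) - (w' j i0 / v i0) * dot pb v := by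
            rw [hwcdef]
            exact dot_sub_smul_right pb (w' j) _ v
          rw [hpbv, mul_zero, sub_zero] at h1
          rw [← h1, hpbwc j]
        have hnus : nuL w pb = nuL wc p := by
          have h2 := nuL_succ w pb
          rw [← hvdef, ← hw'def] at h2
          rw [h2, if_neg (not_not_intro hpbv), zero_add]
          exact nuL_congr w' wc pb p fun j => by rw [hpbw' j]
        have h1 : (Dop pb ^ (1 + nuL wc p)) h = 0 := by rw [← hnus]; exact H pb
        have h2 : (Dop pb ^ (1 + nuL wc p)) h0 = 0 := by
          rw [hh0def, Tmap_Dop_pow v i0 pb hpbv, h1, map_zero]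
        have h3 : (Dop p ^ (1 + nuL wc p)) h0 = (Dop pb ^ (1 + nuL wc p)) h0 := by
          rw [hpbdef, hadef]
          exact Dop_pow_update p i0 _ _ h0 hpd0
        rw [h3]
        exact h2
      have hmem0 : h0 ∈ spanP wc := ih wc h0 Hc
      obtain ⟨u, hu, hdiff⟩ := lift_spanP w' wc v (fun j => ⟨w' j i0 / v i0, by rw [hwcdef]⟩)
        h0 hmem0
      have hmod : h - h0 ∈ Ideal.span {lin v} := Tmap_mod v i0 hi0 h
      have hdiff2 : h - u ∈ Ideal.span {lin v} := by
        have hadd := add_mem hmod hdiff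
        rwa [sub_add_sub_cancel] at hadd
      obtain ⟨g, hg⟩ := Ideal.mem_span_singleton'.1 hdiff2
      have hnule : ∀ p : Fin d → k, 1 + nuL w' p ≤ 1 + nuL w p := by
        intro p
        have h2 := nuL_succ w p
        rw [← hw'def] at h2
        split_ifs at h2 <;> omega
      have Hlin : ∀ p : Fin d → k, (Dop p ^ (1 + nuL w p)) (lin v * g) = 0 := by
        intro p
        rw [mul_comm, hg, map_sub, H p, Dop_pow_prodSet p w' (hnule p) hu, sub_zero]
      have Hg : ∀ p : Fin d → k, (Dop p ^ (1 + nuL w' p)) g = 0 := by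
        intro p
        have hsucc := nuL_succ w p
        rw [← hw'def, ← hvdef] at hsucc
        by_cases hdot : dot p v = 0
        · have hueq : nuL w p = nuL w' p := by
            rw [hsucc, if_neg (not_not_intro hdot), zero_add]
          have hl := Hlin p
          rw [hueq] at hl
          rw [show 1 + nuL w' p = nuL w' p + 1 from by omega] at hl ⊢
          rw [Dop_pow_lin_mul, hdot, map_zero, zero_mul, smul_zero, add_zero] at hl
          rcases mul_eq_zero.1 hl with h1 | h1
          · exact absurd h1 (lin_ne_zero hvne)
          · exact h1
        · have hueq : nuL w p = nuL w' p + 1 := by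
            rw [hsucc, if_pos hdot]
            omega
          set N := nuL w' p with hN
          have H0r : ∀ r : ℕ, (Dop p ^ (N + 2 + r)) (lin v * g) = 0 := by
            intro r
            exact Dop_pow_zero_mono p (Hlin p) (by rw [hueq]; omega)
          have key : ∀ s t : ℕ, g.totalDegree ≤ t + s → (Dop p ^ (N + 1 + t)) g = 0 := by
            intro s
            induction s with
            | zero =>
              intro t ht
              exact Dop_pow_eq_zero_of_totalDegree_lt p g _ (by omega)
            | succ s ihs =>
              intro t ht
              have hnext : (Dop p ^ (N + 1 + t + 1)) g = 0 := by
                rw [show N + 1 + t + 1 = N + 1 + (t + 1) from by omega]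
                exact ihs (t+1) (by omega)
              have hexp := Dop_pow_lin_mul p v g (N + 1 + t)
              rw [hnext, mul_zero, zero_add] at hexp
              rw [show N + 1 + t + 1 = N + 2 + t from by omega] at hexp
              rw [H0r t] at hexp
              have hsm : ((N + 2 + t : ℕ) : k) • (C (dot p v) * (Dop p ^ (N + 1 + t)) g)
                  = 0 := by
                rw [Nat.cast_smul_eq_nsmul]
                exact hexp.symm
              have hC0 := (smul_eq_zero.1 hsm).resolve_left
                (Nat.cast_ne_zero.2 (by omega))
              rcases mul_eq_zero.1 hC0 with h1 | h1
              · exact absurd (C_eq_zero.1 h1) hdot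
              · exact h1
          have hk := key g.totalDegree 0 (by omega)
          rw [show N + 1 + 0 = 1 + N from by omega] at hk
          exact hk
      have hgmem : g ∈ spanP w' := ih w' g Hg
      have hfinal : h = u + lin v * g := by
        rw [mul_comm, hg]
        ring
      rw [hfinal]
      exact add_mem (spanP_tail_le w hu) (mul_lin_mem w hgmem)


lemma pair_sum_right {ι : Type*} (A : Finset ι) (f : MvPolynomial (Fin d) k)
    (g : ι → MvPolynomial (Fin d) k) : pair f (∑ i ∈ A, g i) = ∑ i ∈ A, pair f (g i) := by
  rw [pair_comm, pair_sum_left]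
  exact Finset.sum_congr rfl fun i _ => pair_comm _ _

lemma isHomogeneous_of_coeff {f : MvPolynomial (Fin d) k} {n : ℕ}
    (hf : ∀ s : Fin d →₀ ℕ, coeff s f ≠ 0 → s.degree = n) : f.IsHomogeneous n := by
  intro s hs
  have := hf s hs
  rwa [Finsupp.degree_eq_weight_one] at this

lemma pair_homogeneousComponent {u : MvPolynomial (Fin d) k} {nn : ℕ}
    (hu : u.IsHomogeneous nn) (g : MvPolynomial (Fin d) k) :
    pair u (homogeneousComponent nn g) = pair u g := by
  conv_rhs => rw [← sum_homogeneousComponent g]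
  rw [pair_sum_right]
  rw [Finset.sum_eq_single nn]
  · intro b _ hb
    exact pair_eq_zero_of_isHomogeneous hu (homogeneousComponent_isHomogeneous b g)
      (Ne.symm hb)
  · intro hnn
    rw [homogeneousComponent_eq_zero, pair_zero_right]
    rw [Finset.mem_range, not_lt] at hnn
    omega

section Assembly

variable {m : ℕ}

def colv (M : Matrix (Fin d) (Fin m) k) : Fin m → Fin d → k := fun j i => M i j

def subM (M : Matrix (Fin d) (Fin m) k) :
    MvPolynomial (Fin d) k →ₐ[k] MvPolynomial (Fin m) k :=
  aeval (fun i => lin (M i))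

lemma pderiv_subM (M : Matrix (Fin d) (Fin m) k) (j : Fin m) (g : MvPolynomial (Fin d) k) :
    pderiv j (subM M g) = subM M (Dop (colv M j) g) := by
  induction g using MvPolynomial.induction_on with
  | C a => rw [subM, aeval_C, algebraMap_eq, pderiv_C, Dop_C, map_zero]
  | add f g hf hg =>
    rw [map_add, map_add, hf, hg, ← map_add, map_add (Dop (colv M j)) f g]
  | mul_X f i hf =>
    have hsX : subM M (X i) = lin (M i) := by rw [subM, aeval_X]
    have hsC : subM M (C (colv M j i)) = C (M i j) := by
      rw [subM, aeval_C, algebraMap_eq]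
      rfl
    calc pderiv j (subM M (f * X i)) = pderiv j (subM M f * lin (M i)) := by
          rw [map_mul, hsX]
      _ = subM M (Dop (colv M j) f) * lin (M i) + subM M f * C (M i j) := by
          rw [pderiv_mul, hf, pderiv_lin]
      _ = subM M (f * C (colv M j i) + X i * Dop (colv M j) f) := by
          rw [map_add, map_mul, map_mul, hsX, hsC]
          ring
      _ = subM M (Dop (colv M j) (f * X i)) := by
          rw [Dop_mul, Dop_X]

lemma constantCoeff_lin (c : Fin d → k) : constantCoeff (lin c) = 0 := by
  rw [lin, map_sum]
  simp

lemma constantCoeff_subM (M : Matrix (Fin d) (Fin m) k) (g : MvPolynomial (Fin d) k) :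
    constantCoeff (subM M g) = constantCoeff g := by
  induction g using MvPolynomial.induction_on with
  | C a => rw [subM, aeval_C, algebraMap_eq, constantCoeff_C, constantCoeff_C]
  | add f g hf hg => simp only [map_add, hf, hg]
  | mul_X f i hf =>
    rw [map_mul (subM M) f (X i), map_mul, subM, aeval_X, ← subM, constantCoeff_lin, mul_zero]
    rw [map_mul, constantCoeff_X, mul_zero]

def indi (S : Finset (Fin m)) : Fin m →₀ ℕ := ∑ j ∈ S, Finsupp.single j 1

lemma indi_apply (S : Finset (Fin m)) (a : Fin m) :
    indi S a = if a ∈ S then 1 else 0 := by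
  classical
  rw [indi, Finset.sum_apply']
  refine (Finset.sum_congr rfl fun j _ => ?_).trans
    (Finset.sum_ite_eq' S a fun _ => 1)
  rw [Finsupp.single_apply]

lemma coeff_add_single_eq {t : Fin m →₀ ℕ} {a : Fin m} (ha : t a = 0)
    (h : MvPolynomial (Fin m) k) :
    coeff (t + Finsupp.single a 1) h = coeff t (pderiv a h) := by
  rw [coeff_pderiv, ha]
  norm_num

lemma coeff_indi_subM (M : Matrix (Fin d) (Fin m) k) :
    ∀ (S : Finset (Fin m)) (g : MvPolynomial (Fin d) k),
      coeff (indi S) (subM M g) = pair (∏ j ∈ S, lin (colv M j)) g := by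
  classical
  intro S
  induction S using Finset.induction_on with
  | empty =>
    intro g
    have h0 : indi (∅ : Finset (Fin m)) = 0 := by rw [indi, Finset.sum_empty]
    rw [h0, Finset.prod_empty, pair_one_left]
    exact constantCoeff_subM M g
  | @insert a S ha ih =>
    intro g
    have h1 : indi (insert a S) = indi S + Finsupp.single a 1 := by
      rw [indi, indi, Finset.sum_insert ha, add_comm]
    rw [h1, coeff_add_single_eq (by rw [indi_apply, if_neg ha]) _, pderiv_subM, ih,
      ← pair_lin_mul, Finset.prod_insert ha]

lemma mem_sqIdeal_iff (f : MvPolynomial (Fin m) k) :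
    f ∈ sqIdeal k m ↔ ∀ a ∈ f.support, ∃ i, 2 ≤ a i := by
  have hset : (Set.range fun i => (X i : MvPolynomial (Fin m) k) ^ 2)
      = (fun s => monomial s (1:k)) '' (Set.range fun i : Fin m => Finsupp.single i 2) := by
    ext x
    constructor
    · rintro ⟨i, rfl⟩
      exact ⟨Finsupp.single i 2, ⟨i, rfl⟩, (X_pow_eq_monomial).symm⟩
    · rintro ⟨s, ⟨i, rfl⟩, rfl⟩
      exact ⟨i, X_pow_eq_monomial⟩
  rw [sqIdeal, hset, mem_ideal_span_monomial_image]
  constructor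
  · intro H a ha
    obtain ⟨si, ⟨i, rfl⟩, hle⟩ := H a ha
    exact ⟨i, Finsupp.single_le_iff.1 hle⟩
  · intro H a ha
    obtain ⟨i, hi⟩ := H a ha
    exact ⟨Finsupp.single i 2, ⟨i, rfl⟩, Finsupp.single_le_iff.2 hi⟩

lemma phi_eq (M : Matrix (Fin d) (Fin m) k) (g : MvPolynomial (Fin d) k) :
    aeval (fun i => lform (M i)) g = bmk k m (subM M g) := by
  rw [subM, ← AlgHom.comp_apply, comp_aeval]
  rfl

lemma ker_iff (M : Matrix (Fin d) (Fin m) k) (g : MvPolynomial (Fin d) k) :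
    (aeval (fun i => lform (M i)) g = 0)
      ↔ ∀ S : Finset (Fin m), pair (∏ j ∈ S, lin (colv M j)) g = 0 := by
  rw [phi_eq]
  have hbmk : (bmk k m (subM M g) = 0) ↔ subM M g ∈ sqIdeal k m := by
    rw [bmk, Ideal.Quotient.mkₐ_eq_mk]
    exact Ideal.Quotient.eq_zero_iff_mem
  rw [hbmk, mem_sqIdeal_iff]
  constructor
  · intro H S
    rw [← coeff_indi_subM]
    by_cases hmem : indi S ∈ (subM M g).support
    · obtain ⟨i, hi⟩ := H _ hmem
      rw [indi_apply] at hi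
      split_ifs at hi <;> omega
    · exact notMem_support_iff.1 hmem
  · intro H a ha
    by_contra hno
    push_neg at hno
    have haeq : a = indi a.support := by
      ext j
      rw [indi_apply]
      by_cases hj : j ∈ a.support
      · rw [if_pos hj]
        have h1 := hno j
        have h2 : a j ≠ 0 := Finsupp.mem_support_iff.1 hj
        omega
      · rw [if_neg hj]
        exact Finsupp.notMem_support_iff.1 hj
    have hS := H a.support
    rw [← coeff_indi_subM, ← haeq] at hS
    exact mem_support_iff.1 ha hS

open Classical in
lemma nuL_colv (M : Matrix (Fin d) (Fin m) k) (p : Fin d → k) :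
    nuL (colv M) p = (Finset.univ.filter fun j => (∑ i, p i * M i j) ≠ 0).card := by
  rw [nuL]
  exact Finset.card_bij (fun j _ => j) (fun j hj => Finset.mem_filter.2 ⟨Finset.mem_univ _, (Finset.mem_filter.1 hj).2⟩)
    (fun _ _ _ _ h => h) (fun j hj => ⟨j, Finset.mem_filter.2 ⟨Finset.mem_univ _, (Finset.mem_filter.1 hj).2⟩, rfl⟩)

lemma jIdeal_le_ker (M : Matrix (Fin d) (Fin m) k) :
    jIdeal k M ≤ RingHom.ker (MvPolynomial.aeval (fun i => lform (M i)) :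
      MvPolynomial (Fin d) k →ₐ[k] Bq k m).toRingHom := by
  classical
  rw [jIdeal, Ideal.span_le]
  rintro q ⟨c, rfl⟩
  rw [SetLike.mem_coe, RingHom.mem_ker]
  have hq : ((∑ i, C (c i) * X i : MvPolynomial (Fin d) k) ^
      (1 + (Finset.univ.filter fun j => (∑ i, c i * M i j) ≠ 0).card))
      = lin c ^ (1 + nuL (colv M) c) := by
    rw [lin, nuL_colv]
  show aeval (fun i => lform (M i)) _ = 0
  rw [hq, ker_iff]
  intro S
  rw [pair_comm, ← one_mul (lin c ^ (1 + nuL (colv M) c)), pair_mul_pow]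
  have hz : (Dop c ^ (1 + nuL (colv M) c)) (∏ j ∈ S, lin (colv M j)) = 0 :=
    Dop_pow_prodSet c (colv M) le_rfl (Submodule.subset_span ⟨S, rfl⟩)
  rw [hz, pair_zero_right]

lemma ker_le_jIdeal [CharZero k] (M : Matrix (Fin d) (Fin m) k)
    (g : MvPolynomial (Fin d) k)
    (hg : ∀ S : Finset (Fin m), pair (∏ j ∈ S, lin (colv M j)) g = 0) :
    g ∈ jIdeal k M := by
  classical
  suffices hhom : ∀ (n : ℕ) (f : MvPolynomial (Fin d) k), f.IsHomogeneous n →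
      (∀ S : Finset (Fin m), pair (∏ j ∈ S, lin (colv M j)) f = 0) → f ∈ jIdeal k M by
    rw [← sum_homogeneousComponent g]
    refine Submodule.sum_mem _ fun n _ => ?_
    refine hhom n _ (homogeneousComponent_isHomogeneous n g) fun S => ?_
    by_cases hcard : S.card = n
    · subst hcard
      rw [pair_homogeneousComponent (prod_lin_isHomogeneous (colv M) S) g]
      exact hg S
    · exact pair_eq_zero_of_isHomogeneous (prod_lin_isHomogeneous (colv M) S)
        (homogeneousComponent_isHomogeneous n g) hcard
  intro n f hf hpair
  set Rn := homogeneousSubmodule (Fin d) k n with hRn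
  haveI hfd : FiniteDimensional k Rn := by
    refine Submodule.finiteDimensional_of_le
      (S₂ := restrictTotalDegree (Fin d) k n) ?_
    intro x hx
    rw [mem_restrictTotalDegree]
    exact IsHomogeneous.totalDegree_le hx
  set B : LinearMap.BilinForm k Rn := LinearMap.mk₂ k
    (fun x y : Rn => pair (x : MvPolynomial (Fin d) k) (y : MvPolynomial (Fin d) k))
    (fun x y z => by simp only [Submodule.coe_add]; rw [pair_add_left])
    (fun a x y => by simp only [Submodule.coe_smul]; rw [pair_smul_left]; rfl)
    (fun x y z => by simp only [Submodule.coe_add]; rw [pair_add_right])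
    (fun a x y => by simp only [Submodule.coe_smul]; rw [pair_smul_right]; rfl)
    with hB
  have hBapp : ∀ x y : Rn, B x y = pair (x : MvPolynomial (Fin d) k) y := fun x y => rfl
  have hrefl : B.IsRefl := by
    intro x y hxy
    rw [hBapp, pair_comm]
    exact hxy
  have hnd : B.Nondegenerate := by
    refine (LinearMap.IsRefl.nondegenerate_iff_separatingLeft hrefl).2 ?_
    intro x hx
    have hx2 : (x : MvPolynomial (Fin d) k) = 0 := by
      apply eq_zero_of_pair
      intro s
      by_cases hdeg : s.degree = n
      · have hmem : monomial s (1:k) ∈ Rn := isHomogeneous_monomial _ hdeg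
        have := hx ⟨monomial s 1, hmem⟩
        rw [hBapp, pair_comm] at this
        exact this
      · exact pair_eq_zero_of_isHomogeneous (isHomogeneous_monomial _ rfl) x.2 hdeg
    exact Submodule.coe_eq_zero.1 hx2
  set Pn : Set (MvPolynomial (Fin d) k) :=
    {u | ∃ S : Finset (Fin m), S.card = n ∧ u = ∏ j ∈ S, lin (colv M j)} with hPn
  set Jn : Submodule k Rn :=
    Submodule.comap Rn.subtype (Submodule.restrictScalars k (jIdeal k M)) with hJn
  set Un : Submodule k Rn :=
    Submodule.comap Rn.subtype (Submodule.span k Pn) with hUn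
  have stepA : B.orthogonal Jn ≤ Un := by
    intro x hx
    rw [LinearMap.BilinForm.mem_orthogonal_iff] at hx
    have hD : ∀ p : Fin d → k,
        (Dop p ^ (1 + nuL (colv M) p)) (x : MvPolynomial (Fin d) k) = 0 := by
      intro p
      apply eq_zero_of_pair
      intro s
      have hpr : pair (monomial s (1:k)) ((Dop p ^ (1 + nuL (colv M) p)) (x : _))
          = pair (monomial s (1:k) * lin p ^ (1 + nuL (colv M) p))
            (x : MvPolynomial (Fin d) k) :=
        (pair_mul_pow p (monomial s 1) _ _).symm
      rw [hpr]
      have humem : monomial s (1:k) * lin p ^ (1 + nuL (colv M) p) ∈ jIdeal k M := by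
        apply Ideal.mul_mem_left
        apply Ideal.subset_span
        refine ⟨p, ?_⟩
        rw [lin, nuL_colv]
      have huhom : (monomial s (1:k) * lin p ^ (1 + nuL (colv M) p)).IsHomogeneous
          (s.degree + (1 + nuL (colv M) p)) := by
        refine (isHomogeneous_monomial _ rfl).mul ?_
        have := (lin_isHomogeneous p).pow (1 + nuL (colv M) p)
        rwa [one_mul] at this
      by_cases hdeg : s.degree + (1 + nuL (colv M) p) = n
      · have hyRn : monomial s (1:k) * lin p ^ (1 + nuL (colv M) p) ∈ Rn := by
          show (monomial s (1:k) * lin p ^ (1 + nuL (colv M) p)).IsHomogeneous n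
          rw [← hdeg]
          exact huhom
        have hyJn : (⟨_, hyRn⟩ : Rn) ∈ Jn := by
          rw [hJn, Submodule.mem_comap]
          exact humem
        exact hx _ hyJn
      · exact pair_eq_zero_of_isHomogeneous huhom x.2 hdeg
    have hspan := main_induction m (colv M) (x : MvPolynomial (Fin d) k) hD
    rw [hUn, Submodule.mem_comap]
    have hx' : (Rn.subtype x : MvPolynomial (Fin d) k)
        = homogeneousComponent n (x : MvPolynomial (Fin d) k) := by
      rw [homogeneousComponent_of_mem x.2, if_pos rfl]
      rfl
    rw [hx']
    have himg := Submodule.apply_mem_span_image_of_mem_span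
      (homogeneousComponent n (σ := Fin d) (R := k)) hspan
    refine Submodule.span_le.2 ?_ himg
    rintro _ ⟨_, ⟨S, rfl⟩, rfl⟩
    rw [homogeneousComponent_of_mem (prod_lin_isHomogeneous (colv M) S)]
    by_cases hc : n = S.card
    · rw [if_pos hc]
      exact Submodule.subset_span ⟨S, hc.symm, rfl⟩
    · rw [if_neg hc]
      exact zero_mem _
  have hfRn : f ∈ Rn := hf
  have stepB : (⟨f, hfRn⟩ : Rn) ∈ B.orthogonal Un := by
    rw [LinearMap.BilinForm.mem_orthogonal_iff]
    intro y hy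
    rw [hUn, Submodule.mem_comap] at hy
    have key : ∀ u ∈ Submodule.span k Pn, pair u f = 0 := by
      intro u hu
      induction hu using Submodule.span_induction with
      | mem u hu =>
        obtain ⟨S, hcard, rfl⟩ := hu
        exact hpair S
      | zero => exact pair_zero_left f
      | add x y hx hy ihx ihy => rw [pair_add_left, ihx, ihy, add_zero]
      | smul a x hx ih => rw [pair_smul_left, ih, mul_zero]
    exact key _ hy
  have hfinal : (⟨f, hfRn⟩ : Rn) ∈ Jn := by
    have h1 := LinearMap.BilinForm.orthogonal_le stepA (B := B)
    have h2 := LinearMap.BilinForm.orthogonal_orthogonal hnd hrefl Jn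
    rw [← h2]
    exact h1 stepB
  rw [hJn, Submodule.mem_comap] at hfinal
  exact hfinal

end Assembly

end Stmt8Aux

open Stmt8Aux in
/-- `A(M) ≅ R/J(M)` as graded `k`-algebras, via `z_i ↦` (the `i`-th row of `M`): the
algebra map `R → B`, `z_i ↦ f_i`, has image `A(M)` and kernel `J(M)`. -/
theorem stmt8 (k : Type*) [Field k] [CharZero k] (d m : ℕ)
    (M : Matrix (Fin d) (Fin m) k) (hrk : M.rank = d) :
    (MvPolynomial.aeval (fun i => lform (M i)) :
        MvPolynomial (Fin d) k →ₐ[k] Bq k m).range = Asub k M ∧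
    RingHom.ker (MvPolynomial.aeval (fun i => lform (M i)) :
        MvPolynomial (Fin d) k →ₐ[k] Bq k m).toRingHom = jIdeal k M := by
  constructor
  · exact (Algebra.adjoin_range_eq_range_aeval k fun i => lform (M i)).symm
  · apply le_antisymm
    · intro g hker
      apply ker_le_jIdeal M g
      refine (ker_iff M g).1 ?_
      exact RingHom.mem_ker.1 hker
    · exact jIdeal_le_ker M
end
end

section
/- Let $M$ be a $d$-by-$m$ matrix of rank $d$ over a field $k$ of characteristic zero with no zero columns, and let $g = \sum_{j=1}^m c_j x_j \in A_1(M)$ be a linear form with $c_j \neq 0$ for all $j$. Then for each $0 \leq j \leq m/2$, multiplication by $g^{m-2j}$ gives an injective $k$-linear map from $A_j(M)$ to $A_{m-j}(M)$. -/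
open MvPolynomial

noncomputable section

/-!
Squarefree monomials `x_T` (`T ⊆ Fin m`) form a basis of `B`, so `B` is the space of functions on
the Boolean lattice of subsets of `Fin m`, graded by `|T|`, and multiplication by `g = ∑ c_i x_i` is
the weighted raising operator `U w (T) = ∑_{i ∈ T} c_i w (T \ i)`. The weighted lowering operator
`D w (T) = ∑_{i ∉ T} c_i⁻¹ w (T ∪ i)` satisfies `D U - U D = m - 2j` in degree `j`, and this
`sl₂`-relation forces `U ^ (m - 2j)` to be injective in degree `j ≤ m / 2` in characteristic zero.
Injectivity on all of `B_j` restricts to `A_j(M) ⊆ B_j`, and `g ∈ A(M)` keeps `g ^ (m - 2j) A_j(M)`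
inside `A(M)`.
-/

section RaisingLowering

variable {K E : Type*} [Field K] [AddCommGroup E] [Module K E] {U D : Module.End K E}
  {V : ℕ → Submodule K E} {n : ℕ}

theorem down_up_pow_of_commutator (hU : ∀ j, ∀ w ∈ V j, U w ∈ V (j + 1))
    (hDU : ∀ j, ∀ w ∈ V j, D (U w) = U (D w) + ((n : K) - 2 * j) • w) (r : ℕ) :
    ∀ j, ∀ w ∈ V j, D ((U ^ (r + 1)) w) =
      (U ^ (r + 1)) (D w) + (((r : K) + 1) * (n - 2 * j - r)) • (U ^ r) w := by
  induction r with
  | zero =>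
    intro j w hw
    simpa using hDU j w hw
  | succ r ih =>
    intro j w hw
    rw [pow_succ, Module.End.mul_apply, ih (j + 1) (U w) (hU j w hw), hDU j w hw, map_add,
      map_smul, ← Module.End.mul_apply, ← pow_succ, ← Module.End.mul_apply (U ^ r), ← pow_succ,
      add_assoc, ← add_smul]
    congr 2
    push_cast
    ring

theorem eq_zero_of_down_eq_zero_of_up_pow_eq_zero [CharZero K]
    (hU : ∀ j, ∀ w ∈ V j, U w ∈ V (j + 1))
    (hDU : ∀ j, ∀ w ∈ V j, D (U w) = U (D w) + ((n : K) - 2 * j) • w)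
    {j : ℕ} {w : E} (hw : w ∈ V j) (hD : D w = 0) (hUw : (U ^ (n - 2 * j)) w = 0) : w = 0 := by
  suffices ∀ r ≤ n - 2 * j, (U ^ r) w = 0 by simpa using this 0 (Nat.zero_le _)
  intro r hr
  induction hr using Nat.decreasingInduction with
  | self => exact hUw
  | of_succ r hr ih =>
    have h := down_up_pow_of_commutator hU hDU r j w hw
    rw [ih, hD, map_zero, map_zero, zero_add, eq_comm, smul_eq_zero] at h
    refine h.resolve_left (mul_ne_zero (Nat.cast_add_one_ne_zero r) ?_)
    obtain ⟨t, rfl⟩ : ∃ t, n = 2 * j + r + (t + 1) := ⟨n - 2 * j - r - 1, by omega⟩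
    rw [show ((2 * j + r + (t + 1) : ℕ) : K) - 2 * j - r = t + 1 by push_cast; ring]
    exact Nat.cast_add_one_ne_zero t

theorem eq_zero_of_up_pow_eq_zero [CharZero K] (hU : ∀ j, ∀ w ∈ V j, U w ∈ V (j + 1))
    (hD : ∀ j, ∀ w ∈ V (j + 1), D w ∈ V j) (hD₀ : ∀ w ∈ V 0, D w = 0)
    (hDU : ∀ j, ∀ w ∈ V j, D (U w) = U (D w) + ((n : K) - 2 * j) • w) :
    ∀ j, 2 * j ≤ n → ∀ w ∈ V j, (U ^ (n - 2 * j)) w = 0 → w = 0 := by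
  intro j
  induction j with
  | zero =>
    intro _ w hw hUw
    exact eq_zero_of_down_eq_zero_of_up_pow_eq_zero hU hDU hw (hD₀ w hw) hUw
  | succ j ih =>
    intro hj w hw hUw
    refine eq_zero_of_down_eq_zero_of_up_pow_eq_zero hU hDU hw (ih (by omega) _ (hD j w hw) ?_) hUw
    have hUw' : (U ^ (n - 2 * (j + 1) + 1)) w = 0 := by
      rw [pow_succ', Module.End.mul_apply, hUw, map_zero]
    have h := down_up_pow_of_commutator hU hDU (n - 2 * (j + 1)) (j + 1) w hw
    rw [hUw', hUw, map_zero, smul_zero, add_zero] at h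
    rw [show n - 2 * j = n - 2 * (j + 1) + 1 + 1 by omega, pow_succ', Module.End.mul_apply, ← h,
      map_zero]

end RaisingLowering

namespace BooleanLattice

variable {k σ : Type*} [Field k]

def homog (k : Type*) [Field k] (j : ℕ) : Submodule k (Finset σ → k) :=
  Submodule.pi {T | T.card ≠ j} fun _ => ⊥

theorem mem_homog {j : ℕ} {w : Finset σ → k} : w ∈ homog k j ↔ ∀ T, T.card ≠ j → w T = 0 := by
  simp [homog, Submodule.mem_pi]

variable [DecidableEq σ]

def up (c : σ → k) : Module.End k (Finset σ → k) :=
  LinearMap.pi fun T => ∑ i ∈ T, c i • LinearMap.proj (T.erase i)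

@[simp]
theorem up_apply (c : σ → k) (w : Finset σ → k) (T : Finset σ) :
    up c w T = ∑ i ∈ T, c i * w (T.erase i) := by
  simp [up]

theorem up_mem_homog (c : σ → k) {j : ℕ} {w : Finset σ → k} (hw : w ∈ homog k j) :
    up c w ∈ homog k (j + 1) := by
  rw [mem_homog] at hw ⊢
  intro T hT
  rw [up_apply]
  refine Finset.sum_eq_zero fun i hi => ?_
  have := Finset.card_pos.mpr ⟨i, hi⟩
  rw [hw _ (by rw [Finset.card_erase_of_mem hi]; omega), mul_zero]

theorem up_pow_mem_homog (c : σ → k) {j : ℕ} {w : Finset σ → k} (hw : w ∈ homog k j) (r : ℕ) :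
    (up c ^ r) w ∈ homog k (j + r) := by
  induction r with
  | zero => simpa using hw
  | succ r ih => simpa [pow_succ', ← add_assoc] using up_mem_homog c ih

variable [Fintype σ]

def down (c : σ → k) : Module.End k (Finset σ → k) :=
  LinearMap.pi fun T => ∑ i ∈ Tᶜ, (c i)⁻¹ • LinearMap.proj (insert i T)

@[simp]
theorem down_apply (c : σ → k) (w : Finset σ → k) (T : Finset σ) :
    down c w T = ∑ i ∈ Tᶜ, (c i)⁻¹ * w (insert i T) := by
  simp [down]

theorem down_mem_homog (c : σ → k) {j : ℕ} {w : Finset σ → k} (hw : w ∈ homog k (j + 1)) :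
    down c w ∈ homog k j := by
  rw [mem_homog] at hw ⊢
  intro T hT
  rw [down_apply]
  refine Finset.sum_eq_zero fun i hi => ?_
  rw [hw _ (by rw [Finset.card_insert_of_notMem (Finset.mem_compl.mp hi)]; omega), mul_zero]

theorem down_eq_zero_of_mem_homog_zero (c : σ → k) {w : Finset σ → k} (hw : w ∈ homog k 0) :
    down c w = 0 := by
  funext T
  rw [down_apply]
  refine Finset.sum_eq_zero fun i hi => ?_
  rw [mem_homog.mp hw _ (Finset.insert_nonempty i T).card_ne_zero, mul_zero]

theorem down_up_apply_sub_up_down_apply (c : σ → k) (hc : ∀ i, c i ≠ 0) (w : Finset σ → k)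
    (T : Finset σ) :
    down c (up c w) T - up c (down c w) T = ((Fintype.card σ : k) - 2 * T.card) * w T := by
  have hTm : T.card ≤ Fintype.card σ := T.card_le_univ
  rw [down_apply, up_apply]
  have hdown_up : ∀ i ∈ Tᶜ, (c i)⁻¹ * up c w (insert i T)
      = w T + ∑ l ∈ T, (c i)⁻¹ * c l * w (insert i (T.erase l)) := by
    intro i hi
    have hiT : i ∉ T := Finset.mem_compl.mp hi
    rw [up_apply, Finset.sum_insert hiT, Finset.erase_insert hiT, mul_add, Finset.mul_sum,
      ← mul_assoc, inv_mul_cancel₀ (hc i), one_mul]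
    congr 1
    refine Finset.sum_congr rfl fun l hl => ?_
    rw [← mul_assoc, Finset.erase_insert_of_ne (ne_of_mem_of_not_mem hl hiT).symm]
  have hup_down : ∀ l ∈ T, c l * down c w (T.erase l)
      = w T + ∑ i ∈ Tᶜ, (c i)⁻¹ * c l * w (insert i (T.erase l)) := by
    intro l hl
    rw [down_apply, Finset.compl_erase, Finset.sum_insert (Finset.notMem_compl.mpr hl),
      Finset.insert_erase hl, mul_add, ← mul_assoc, mul_inv_cancel₀ (hc l), one_mul,
      Finset.mul_sum]
    congr 1
    exact Finset.sum_congr rfl fun i _ => by ring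
  rw [Finset.sum_congr rfl hdown_up, Finset.sum_congr rfl hup_down, Finset.sum_add_distrib,
    Finset.sum_add_distrib, Finset.sum_comm (s := Tᶜ), Finset.sum_const, Finset.sum_const,
    Finset.card_compl, nsmul_eq_mul, nsmul_eq_mul, Nat.cast_sub hTm]
  ring

theorem down_up_of_mem_homog (c : σ → k) (hc : ∀ i, c i ≠ 0) {j : ℕ} {w : Finset σ → k}
    (hw : w ∈ homog k j) :
    down c (up c w) = up c (down c w) + ((Fintype.card σ : k) - 2 * j) • w := by
  funext T
  rw [Pi.add_apply, Pi.smul_apply, smul_eq_mul, ← sub_eq_iff_eq_add',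
    down_up_apply_sub_up_down_apply c hc]
  by_cases hT : T.card = j
  · rw [hT]
  · rw [mem_homog.mp hw T hT, mul_zero, mul_zero]

theorem up_single (c : σ → k) (S : Finset σ) :
    up c (Pi.single S 1) = ∑ i ∈ Sᶜ, c i • Pi.single (insert i S) 1 := by
  funext T
  simp only [up_apply, Finset.sum_apply, Pi.smul_apply, Pi.single_apply, smul_eq_mul, mul_ite,
    mul_one, mul_zero, ← Finset.sum_filter]
  congr 1
  ext i
  simp only [Finset.mem_filter, Finset.mem_compl]
  constructor
  · rintro ⟨hi, rfl⟩
    exact ⟨Finset.notMem_erase i T, (Finset.insert_erase hi).symm⟩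
  · rintro ⟨hi, h⟩
    have hiT : i ∈ T := h ▸ Finset.mem_insert_self i S
    exact ⟨hiT, (Finset.erase_eq_iff_eq_insert hiT hi).mpr h⟩

theorem eq_zero_of_mem_homog_of_up_pow_eq_zero [CharZero k] (c : σ → k) (hc : ∀ i, c i ≠ 0)
    {j : ℕ} (hj : 2 * j ≤ Fintype.card σ) {w : Finset σ → k} (hw : w ∈ homog k j)
    (hUw : (up c ^ (Fintype.card σ - 2 * j)) w = 0) : w = 0 :=
  eq_zero_of_up_pow_eq_zero (V := fun j ↦ homog k j) (fun _ _ ↦ up_mem_homog c)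
    (fun _ _ ↦ down_mem_homog c) (fun _ ↦ down_eq_zero_of_mem_homog_zero c)
    (fun _ _ ↦ down_up_of_mem_homog c hc) j hj w hw hUw

end BooleanLattice

open BooleanLattice

section SquarefreeMonomials

variable {k : Type*} [Field k] {m : ℕ}

def sqfreeMonomial (k : Type*) [Field k] (m : ℕ) (T : Finset (Fin m)) : Bq k m :=
  bmk k m (∏ i ∈ T, X i)

def sqfreeCombination (k : Type*) [Field k] (m : ℕ) : (Finset (Fin m) → k) →ₗ[k] Bq k m :=
  Fintype.linearCombination k (sqfreeMonomial k m)

def sqfreeExponent (T : Finset (Fin m)) : Fin m →₀ ℕ :=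
  ∑ i ∈ T, Finsupp.single i 1

theorem sqfreeExponent_apply (T : Finset (Fin m)) (i : Fin m) :
    sqfreeExponent T i = if i ∈ T then 1 else 0 := by
  simp [sqfreeExponent, Finsupp.finsetSum_apply, Finsupp.single_apply]

theorem sqfreeExponent_injective : Function.Injective (sqfreeExponent (m := m)) := by
  intro S T h
  ext i
  have := DFunLike.congr_fun h i
  rw [sqfreeExponent_apply, sqfreeExponent_apply] at this
  split_ifs at this <;> simp_all

theorem prod_X_eq_monomial_sqfreeExponent (T : Finset (Fin m)) :
    (∏ i ∈ T, X i : MvPolynomial (Fin m) k) = monomial (sqfreeExponent T) 1 := by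
  rw [sqfreeExponent, monomial_sum_one]
  rfl

theorem sqIdeal_eq_span_monomial :
    sqIdeal k m = Ideal.span ((fun s ↦ monomial s 1) '' Set.range fun i ↦ Finsupp.single i 2) := by
  rw [sqIdeal, ← Set.range_comp]
  congr
  funext i
  exact X_pow_eq_monomial

theorem linearIndependent_sqfreeMonomial : LinearIndependent k (sqfreeMonomial k m) := by
  rw [Fintype.linearIndependent_iff]
  intro w hw S
  set p : MvPolynomial (Fin m) k := ∑ T, w T • monomial (sqfreeExponent T) 1
  have hp : p ∈ sqIdeal k m := by
    rw [← Ideal.Quotient.eq_zero_iff_mem, ← Ideal.Quotient.mkₐ_eq_mk k, ← bmk, ← hw]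
    simp [p, map_sum, sqfreeMonomial, prod_X_eq_monomial_sqfreeExponent]
  have hcoeff : p.coeff (sqfreeExponent S) = w S := by
    simp [p, coeff_sum, coeff_monomial, sqfreeExponent_injective.eq_iff]
  by_contra hS
  rw [sqIdeal_eq_span_monomial, mem_ideal_span_monomial_image] at hp
  obtain ⟨_, ⟨i, rfl⟩, hle⟩ := hp _ (mem_support_iff.mpr (hcoeff ▸ hS))
  have := hle i
  rw [Finsupp.single_eq_same, sqfreeExponent_apply] at this
  split_ifs at this <;> omega

theorem map_sqfreeCombination_homog (j : ℕ) :
    (homog k j).map (sqfreeCombination k m) = Bgrade k m j := by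
  apply le_antisymm
  · rintro _ ⟨w, hw, rfl⟩
    rw [sqfreeCombination, Fintype.linearCombination_apply]
    refine Submodule.sum_mem _ fun T _ ↦ ?_
    by_cases hT : T.card = j
    · exact Submodule.smul_mem _ _ (Submodule.subset_span ⟨T, hT, rfl⟩)
    · rw [mem_homog.mp hw T hT, zero_smul]
      exact zero_mem _
  · rw [Bgrade, Submodule.span_le]
    rintro _ ⟨S, hS, rfl⟩
    refine ⟨Pi.single S 1, mem_homog.mpr fun T hT ↦ ?_, by simp [sqfreeCombination, sqfreeMonomial]⟩
    exact Pi.single_eq_of_ne (by rintro rfl; exact hT hS) _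

theorem bmk_X_mul_sqfreeMonomial_of_mem {i : Fin m} {S : Finset (Fin m)} (hi : i ∈ S) :
    bmk k m (X i) * sqfreeMonomial k m S = 0 := by
  have hsq : bmk k m (X i ^ 2) = 0 := by
    rw [bmk, Ideal.Quotient.mkₐ_eq_mk, Ideal.Quotient.eq_zero_iff_mem]
    exact Ideal.subset_span ⟨i, rfl⟩
  rw [sqfreeMonomial, ← map_mul, ← Finset.mul_prod_erase S _ hi, ← mul_assoc, ← sq, map_mul, hsq,
    zero_mul]

theorem bmk_X_mul_sqfreeMonomial_of_notMem {i : Fin m} {S : Finset (Fin m)} (hi : i ∉ S) :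
    bmk k m (X i) * sqfreeMonomial k m S = sqfreeMonomial k m (insert i S) := by
  rw [sqfreeMonomial, sqfreeMonomial, ← map_mul, Finset.prod_insert hi]

theorem lform_mul_sqfreeMonomial (c : Fin m → k) (S : Finset (Fin m)) :
    lform c * sqfreeMonomial k m S = ∑ i ∈ Sᶜ, c i • sqfreeMonomial k m (insert i S) := by
  have hlform : lform c = ∑ i, c i • bmk k m (X i) := by
    rw [lform, map_sum]
    exact Finset.sum_congr rfl fun i _ ↦ by rw [← smul_eq_C_mul, map_smul]
  rw [hlform, Finset.sum_mul, ← Finset.sum_compl_add_sum S, Finset.sum_eq_zero (s := S), add_zero]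
  · refine Finset.sum_congr rfl fun i hi ↦ ?_
    rw [smul_mul_assoc, bmk_X_mul_sqfreeMonomial_of_notMem (Finset.mem_compl.mp hi)]
  · intro i hi
    rw [smul_mul_assoc, bmk_X_mul_sqfreeMonomial_of_mem hi, smul_zero]

theorem lform_mul_sqfreeCombination (c : Fin m → k) (w : Finset (Fin m) → k) :
    lform c * sqfreeCombination k m w = sqfreeCombination k m (up c w) := by
  suffices (LinearMap.mulLeft k (lform c)).comp (sqfreeCombination k m) =
      (sqfreeCombination k m).comp (up c) from
    LinearMap.congr_fun this w
  refine LinearMap.pi_ext' fun S ↦ LinearMap.ext_ring ?_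
  simp [sqfreeCombination, up_single, lform_mul_sqfreeMonomial, map_sum]

theorem lform_pow_mul_sqfreeCombination (c : Fin m → k) (r : ℕ) (w : Finset (Fin m) → k) :
    lform c ^ r * sqfreeCombination k m w = sqfreeCombination k m ((up c ^ r) w) := by
  induction r with
  | zero => simp
  | succ r ih =>
    rw [pow_succ', mul_assoc, ih, lform_mul_sqfreeCombination, pow_succ', Module.End.mul_apply]

theorem lform_pow_mul_mem_Bgrade (c : Fin m → k) (r : ℕ) {j : ℕ} {u : Bq k m}
    (hu : u ∈ Bgrade k m j) : lform c ^ r * u ∈ Bgrade k m (j + r) := by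
  rw [← map_sqfreeCombination_homog] at hu ⊢
  obtain ⟨w, hw, rfl⟩ := hu
  exact ⟨_, up_pow_mem_homog c hw r, (lform_pow_mul_sqfreeCombination c r w).symm⟩

theorem eq_zero_of_lform_pow_mul_eq_zero [CharZero k] {c : Fin m → k} (hc : ∀ i, c i ≠ 0)
    {j : ℕ} (hj : 2 * j ≤ m) {u : Bq k m} (hu : u ∈ Bgrade k m j)
    (h : lform c ^ (m - 2 * j) * u = 0) : u = 0 := by
  rw [← map_sqfreeCombination_homog] at hu
  obtain ⟨w, hw, rfl⟩ := hu
  rw [lform_pow_mul_sqfreeCombination, ← map_zero (sqfreeCombination k m)] at h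
  have hUw := linearIndependent_sqfreeMonomial.fintypeLinearCombination_injective h
  rw [eq_zero_of_mem_homog_of_up_pow_eq_zero c hc (by simpa using hj) hw (by simpa using hUw),
    map_zero]

end SquarefreeMonomials

theorem stmt12_general (k : Type*) [Field k] [CharZero k] (d m : ℕ)
    (M : Matrix (Fin d) (Fin m) k)
    (c : Fin m → k) (hc : ∀ j, c j ≠ 0) (hg : lform c ∈ Aj k M 1) :
    ∀ j : ℕ, 2 * j ≤ m →
      (∀ u ∈ Aj k M j, lform c ^ (m - 2 * j) * u ∈ Aj k M (m - j)) ∧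
      (∀ u ∈ Aj k M j, ∀ v ∈ Aj k M j,
        lform c ^ (m - 2 * j) * u = lform c ^ (m - 2 * j) * v → u = v) := by
  intro j hj
  have hgA : lform c ∈ Asub k M := (Submodule.mem_inf.mp hg).1
  refine ⟨fun u hu ↦ ?_, fun u hu v hv huv ↦ ?_⟩
  · obtain ⟨huA, huB⟩ := Submodule.mem_inf.mp hu
    refine Submodule.mem_inf.mpr ⟨(Asub k M).mul_mem (pow_mem hgA _) huA, ?_⟩
    simpa [show j + (m - 2 * j) = m - j by omega] using lform_pow_mul_mem_Bgrade c (m - 2 * j) huB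
  · rw [← sub_eq_zero]
    refine eq_zero_of_lform_pow_mul_eq_zero hc hj (sub_mem hu.2 hv.2) ?_
    rw [mul_sub, huv, sub_self]

/-- Strong-Lefschetz-type injectivity: if `g = Σ c_j x_j ∈ A₁(M)` with all `c_j ≠ 0`, then for
`0 ≤ j ≤ m/2`, multiplication by `g^{m-2j}` maps `A_j(M)` injectively into `A_{m-j}(M)`. -/
theorem stmt12 (k : Type*) [Field k] [CharZero k] (d m : ℕ)
    (M : Matrix (Fin d) (Fin m) k) (hrk : M.rank = d) (hcol : ∀ j, ∃ i, M i j ≠ 0)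
    (c : Fin m → k) (hc : ∀ j, c j ≠ 0) (hg : lform c ∈ Aj k M 1) :
    ∀ j : ℕ, 2 * j ≤ m →
      (∀ u ∈ Aj k M j, lform c ^ (m - 2 * j) * u ∈ Aj k M (m - j)) ∧
      (∀ u ∈ Aj k M j, ∀ v ∈ Aj k M j,
        lform c ^ (m - 2 * j) * u = lform c ^ (m - 2 * j) * v → u = v) :=
  stmt12_general k d m M c hc hg
end
end

section
/- Let $k$ be a field of characteristic zero, $m \geq 2j$, and let $g = \sum_{i=1}^m c_i x_i \in B_1$ with all $c_i \neq 0$. Then multiplication by $g^{m-2j}$ is a $k$-linear isomorphism from $B_j$ onto $B_{m-j}$, where $B = k[x_1,\ldots,x_m]/(x_1^2,\ldots,x_m^2)$. -/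
open MvPolynomial

noncomputable section

set_option linter.unusedSectionVars false

namespace Stmt13Aux

open Finset

variable {k : Type*} [Field k] {m : ℕ}

/-- image of the squarefree monomial with support `s`. -/
def es (k : Type*) [Field k] {m : ℕ} (s : Finset (Fin m)) : Bq k m :=
  bmk k m (∏ i ∈ s, X i)

lemma bmk_Xsq (i : Fin m) : bmk k m ((X i : MvPolynomial (Fin m) k) ^ 2) = 0 := by
  rw [bmk, Ideal.Quotient.mkₐ_eq_mk, Ideal.Quotient.eq_zero_iff_mem]
  exact Ideal.subset_span ⟨i, rfl⟩

lemma es_mul_disjoint {s t : Finset (Fin m)} (h : Disjoint s t) :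
    es k s * es k t = es k (s ∪ t) := by
  rw [es, es, es, ← map_mul, ← Finset.prod_union h]

lemma es_mul_mem {s t : Finset (Fin m)} {i : Fin m} (hs : i ∈ s) (ht : i ∈ t) :
    es k s * es k t = 0 := by
  rw [es, es, ← map_mul]
  rw [← Finset.mul_prod_erase _ _ hs, ← Finset.mul_prod_erase _ _ ht]
  have : (X i * ∏ x ∈ s.erase i, X x) * (X i * ∏ x ∈ t.erase i, X x)
      = (X i : MvPolynomial (Fin m) k) ^ 2 * ((∏ x ∈ s.erase i, X x) * ∏ x ∈ t.erase i, X x) := by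
    ring
  rw [this, map_mul, bmk_Xsq, zero_mul]

/-- squarefree exponent vector -/
def sfExp {m : ℕ} (s : Finset (Fin m)) : Fin m →₀ ℕ := ∑ i ∈ s, Finsupp.single i 1

lemma sfExp_apply (s : Finset (Fin m)) (i : Fin m) :
    sfExp s i = if i ∈ s then 1 else 0 := by
  classical
  rw [sfExp, Finsupp.finset_sum_apply]
  split_ifs with h
  · rw [Finset.sum_eq_single i (fun b _ hb => Finsupp.single_eq_of_ne' hb) (fun h' => absurd h h')]
    simp
  · exact Finset.sum_eq_zero fun b hb => Finsupp.single_eq_of_ne (fun e => h (e ▸ hb))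

lemma sfExp_le_one (s : Finset (Fin m)) (i : Fin m) : sfExp s i ≤ 1 := by
  rw [sfExp_apply]; split <;> omega

lemma sfExp_inj {s t : Finset (Fin m)} (h : sfExp s = sfExp t) : s = t := by
  ext i
  have := congrArg (fun f : Fin m →₀ ℕ => f i) h
  simp only [sfExp_apply] at this
  by_cases hs : i ∈ s <;> by_cases ht : i ∈ t <;> simp [hs, ht] at this ⊢

lemma prod_X_eq (s : Finset (Fin m)) :
    (∏ i ∈ s, X i : MvPolynomial (Fin m) k) = monomial (sfExp s) 1 := by
  classical
  induction s using Finset.induction with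
  | empty => simp [sfExp]
  | @insert a s hns ih =>
    rw [Finset.prod_insert hns, ih]
    have h2 : sfExp (insert a s) = Finsupp.single a 1 + sfExp s := by
      rw [sfExp, sfExp, Finset.sum_insert hns]
    rw [h2, X, monomial_mul, one_mul]

/-- coefficients at squarefree exponents vanish on the ideal -/
lemma coeff_eq_zero_of_mem {p : MvPolynomial (Fin m) k} (hp : p ∈ sqIdeal k m)
    (d : Fin m →₀ ℕ) (hd : ∀ i, d i ≤ 1) : coeff d p = 0 := by
  classical
  revert d
  refine Submodule.span_induction ?_ ?_ ?_ ?_ hp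
  · rintro x ⟨i, rfl⟩ d hd
    simp only []
    rw [X_pow_eq_monomial, coeff_monomial]
    split_ifs with h
    · exfalso; have := hd i; rw [← h, Finsupp.single_eq_same] at this; omega
    · rfl
  · intro d _; simp
  · intro p q _ _ hp hq d hd
    rw [coeff_add, hp d hd, hq d hd, add_zero]
  · intro r p _ hp d hd
    rw [smul_eq_mul, coeff_mul]
    refine Finset.sum_eq_zero fun x hx => ?_
    rw [Finset.HasAntidiagonal.mem_antidiagonal] at hx
    have h2 : ∀ i, x.2 i ≤ 1 := fun i => by
      have : x.1 i + x.2 i = d i := by rw [← hx]; rfl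
      have := hd i; omega
    rw [hp x.2 h2, mul_zero]


lemma lform_mul_es (c : Fin m → k) (s : Finset (Fin m)) :
    lform c * es k s = ∑ i ∈ sᶜ, c i • es k (insert i s) := by
  classical
  have h1 : lform c = ∑ i, c i • es k ({i} : Finset (Fin m)) := by
    rw [lform, map_sum]
    refine Finset.sum_congr rfl fun i _ => ?_
    rw [es, Finset.prod_singleton, ← smul_eq_C_mul, map_smul]
  rw [h1, Finset.sum_mul, ← Finset.sum_add_sum_compl s]
  have h2 : ∑ i ∈ s, c i • es k ({i} : Finset (Fin m)) * es k s = 0 := by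
    refine Finset.sum_eq_zero fun i hi => ?_
    rw [smul_mul_assoc, es_mul_mem (Finset.mem_singleton_self i) hi, smul_zero]
  rw [h2, zero_add]
  refine Finset.sum_congr rfl fun i hi => ?_
  rw [smul_mul_assoc, es_mul_disjoint (Finset.disjoint_singleton_left.mpr (Finset.mem_compl.mp hi)),
    ← Finset.insert_eq]

lemma mul_es_single_mem_span {u : Bq k m} (i : Fin m)
    (hu : u ∈ Submodule.span k (Set.range (es k (m := m)))) :
    u * es k ({i} : Finset (Fin m)) ∈ Submodule.span k (Set.range (es k (m := m))) := by
  classical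
  refine Submodule.span_induction ?_ ?_ ?_ ?_ hu
  · rintro x ⟨s, rfl⟩
    by_cases h : i ∈ s
    · rw [es_mul_mem h (Finset.mem_singleton_self i)]
      exact Submodule.zero_mem _
    · rw [es_mul_disjoint (Finset.disjoint_singleton_right.mpr h), Finset.union_comm,
        ← Finset.insert_eq]
      exact Submodule.subset_span ⟨insert i s, rfl⟩
  · rw [zero_mul]; exact Submodule.zero_mem _
  · intro a b _ _ ha hb; rw [add_mul]; exact Submodule.add_mem _ ha hb
  · intro r a _ ha; rw [smul_mul_assoc]; exact Submodule.smul_mem _ r ha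

lemma es_empty : es k (∅ : Finset (Fin m)) = 1 := by
  rw [es, Finset.prod_empty, map_one]

lemma bmk_mem_span (p : MvPolynomial (Fin m) k) :
    bmk k m p ∈ Submodule.span k (Set.range (es k (m := m))) := by
  induction p using MvPolynomial.induction_on with
  | C a =>
    have h1 : bmk k m (C a) = a • es k (∅ : Finset (Fin m)) := by
      rw [es_empty]
      have : bmk k m (C a) = algebraMap k (Bq k m) a := (bmk k m).commutes a
      rw [this, Algebra.algebraMap_eq_smul_one]
    rw [h1]
    exact Submodule.smul_mem _ a (Submodule.subset_span ⟨∅, rfl⟩)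
  | add p q hp hq => rw [map_add]; exact Submodule.add_mem _ hp hq
  | mul_X p i hp =>
    have h1 : bmk k m (p * X i) = bmk k m p * es k ({i} : Finset (Fin m)) := by
      rw [map_mul, es, Finset.prod_singleton]
    rw [h1]; exact mul_es_single_mem_span i hp

lemma span_es_top : ⊤ ≤ Submodule.span k (Set.range (es k (m := m))) := by
  intro x _
  obtain ⟨p, rfl⟩ := Ideal.Quotient.mkₐ_surjective k (sqIdeal k m) x
  exact bmk_mem_span p

lemma linearIndependent_es : LinearIndependent k (es k (m := m)) := by
  classical
  rw [Fintype.linearIndependent_iff]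
  intro g hg s₀
  set p : MvPolynomial (Fin m) k := ∑ s, g s • ∏ i ∈ s, X i with hp
  have hbp : bmk k m p = 0 := by
    rw [hp, map_sum]
    simpa only [map_smul, es] using hg
  have hmem : p ∈ sqIdeal k m := by
    rwa [bmk, Ideal.Quotient.mkₐ_eq_mk, Ideal.Quotient.eq_zero_iff_mem] at hbp
  have hcoeff : coeff (sfExp s₀) p = g s₀ := by
    rw [hp, coeff_sum]
    have h1 : ∀ s : Finset (Fin m),
        coeff (sfExp s₀) (g s • ∏ i ∈ s, X i) = if s = s₀ then g s else 0 := by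
      intro s
      rw [coeff_smul, prod_X_eq, coeff_monomial, smul_eq_mul]
      by_cases h : s = s₀
      · rw [if_pos h, if_pos (by rw [h]), mul_one]
      · rw [if_neg h, if_neg (fun e => h (sfExp_inj e)), mul_zero]
    rw [Finset.sum_congr rfl fun s _ => h1 s, Finset.sum_ite_eq' Finset.univ s₀ g,
      if_pos (Finset.mem_univ s₀)]
  rw [coeff_eq_zero_of_mem hmem (sfExp s₀) (sfExp_le_one s₀)] at hcoeff
  exact hcoeff.symm

def sfBasis (k : Type*) [Field k] (m : ℕ) : Module.Basis (Finset (Fin m)) k (Bq k m) :=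
  Module.Basis.mk linearIndependent_es span_es_top

lemma es_mem_Bgrade {s : Finset (Fin m)} {j : ℕ} (h : s.card = j) :
    es k s ∈ Bgrade k m j :=
  Submodule.subset_span ⟨s, h, rfl⟩

lemma Bgrade_eq (j : ℕ) :
    Bgrade k m j = Submodule.span k
      (Set.range fun s : {s : Finset (Fin m) // s.card = j} => es k s.val) := by
  rw [Bgrade]
  congr 1
  ext b
  constructor
  · rintro ⟨s, hs, rfl⟩; exact ⟨⟨s, hs⟩, rfl⟩
  · rintro ⟨⟨s, hs⟩, rfl⟩; exact ⟨s, hs, rfl⟩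


variable (k m) in
/-- the "down" operator -/
def Fop (c : Fin m → k) : Bq k m →ₗ[k] Bq k m :=
  (sfBasis k m).constr k fun s => ∑ i ∈ s, (c i)⁻¹ • es k (s.erase i)

lemma Fop_es (c : Fin m → k) (s : Finset (Fin m)) :
    Fop k m c (es k s) = ∑ i ∈ s, (c i)⁻¹ • es k (s.erase i) := by
  have h : es k s = sfBasis k m s := (Module.Basis.mk_apply _ _ _).symm
  rw [h, Fop, Module.Basis.constr_basis]

lemma card_compl_eq (s : Finset (Fin m)) : sᶜ.card = m - s.card := by
  rw [Finset.card_compl, Fintype.card_fin]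

lemma card_cast_le (s : Finset (Fin m)) : s.card ≤ m := by
  simpa using Finset.card_le_univ s

section comm

variable {c : Fin m → k} (hc : ∀ i, c i ≠ 0)
include hc

lemma comm_es (s : Finset (Fin m)) :
    Fop k m c (lform c * es k s)
      = lform c * Fop k m c (es k s) + ((m : k) - 2 * s.card) • es k s := by
  classical
  have hL : Fop k m c (lform c * es k s)
      = (sᶜ.card : k) • es k s
        + ∑ l ∈ sᶜ, ∑ i ∈ s, (c l * (c i)⁻¹) • es k (insert l (s.erase i)) := by
    rw [lform_mul_es, map_sum]
    have h1 : ∀ l ∈ sᶜ, Fop k m c (c l • es k (insert l s))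
        = es k s + ∑ i ∈ s, (c l * (c i)⁻¹) • es k (insert l (s.erase i)) := by
      intro l hl
      have hls : l ∉ s := Finset.mem_compl.mp hl
      rw [map_smul, Fop_es, Finset.sum_insert hls, Finset.erase_insert hls, smul_add,
        smul_smul, mul_inv_cancel₀ (hc l), one_smul, Finset.smul_sum]
      congr 1
      refine Finset.sum_congr rfl fun i hi => ?_
      rw [Finset.erase_insert_of_ne (fun e : l = i => hls (e ▸ hi)), smul_smul]
    rw [Finset.sum_congr rfl h1, Finset.sum_add_distrib, Finset.sum_const,
      ← Nat.cast_smul_eq_nsmul k]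
  have hR : lform c * Fop k m c (es k s)
      = (s.card : k) • es k s
        + ∑ i ∈ s, ∑ l ∈ sᶜ, (c l * (c i)⁻¹) • es k (insert l (s.erase i)) := by
    rw [Fop_es, Finset.mul_sum]
    have h1 : ∀ i ∈ s, lform c * (c i)⁻¹ • es k (s.erase i)
        = es k s + ∑ l ∈ sᶜ, (c l * (c i)⁻¹) • es k (insert l (s.erase i)) := by
      intro i hi
      rw [mul_smul_comm, lform_mul_es, Finset.compl_erase,
        Finset.sum_insert (by simp [hi]), Finset.insert_erase hi, smul_add, smul_smul,
        inv_mul_cancel₀ (hc i), one_smul, Finset.smul_sum]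
      congr 1
      refine Finset.sum_congr rfl fun l hl => ?_
      rw [smul_smul, mul_comm ((c i)⁻¹) (c l)]
    rw [Finset.sum_congr rfl h1, Finset.sum_add_distrib, Finset.sum_const,
      ← Nat.cast_smul_eq_nsmul k]
  rw [hL, hR, Finset.sum_comm]
  have hcard : (sᶜ.card : k) = (s.card : k) + ((m : k) - 2 * s.card) := by
    rw [card_compl_eq, Nat.cast_sub (card_cast_le s)]
    ring
  rw [hcard, add_smul]
  abel

lemma comm_grade {j : ℕ} {u : Bq k m} (hu : u ∈ Bgrade k m j) :
    Fop k m c (lform c * u) = lform c * Fop k m c u + ((m : k) - 2 * j) • u := by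
  refine Submodule.span_induction ?_ ?_ ?_ ?_ hu
  · rintro x ⟨s, hs, rfl⟩
    have h : (bmk k m) (∏ i ∈ s, X i) = es k s := rfl
    rw [h, comm_es hc s, hs]
  · simp
  · intro a b _ _ ha hb
    rw [mul_add, map_add, ha, hb, map_add, mul_add, smul_add]
    abel
  · intro r a _ ha
    rw [mul_smul_comm, map_smul, ha, smul_add, map_smul, mul_smul_comm, smul_comm r]

end comm


lemma lform_mul_mem {c : Fin m → k} {j : ℕ} {u : Bq k m} (hu : u ∈ Bgrade k m j) :
    lform c * u ∈ Bgrade k m (j + 1) := by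
  refine Submodule.span_induction ?_ ?_ ?_ ?_ hu
  · rintro x ⟨s, hs, rfl⟩
    have h : (bmk k m) (∏ i ∈ s, X i) = es k s := rfl
    rw [h, lform_mul_es]
    refine Submodule.sum_mem _ fun i hi => Submodule.smul_mem _ _ (es_mem_Bgrade ?_)
    rw [Finset.card_insert_of_notMem (Finset.mem_compl.mp hi), hs]
  · rw [mul_zero]; exact Submodule.zero_mem _
  · intro a b _ _ ha hb; rw [mul_add]; exact Submodule.add_mem _ ha hb
  · intro r a _ ha; rw [mul_smul_comm]; exact Submodule.smul_mem _ r ha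

lemma lform_pow_mul_mem {c : Fin m → k} {j : ℕ} {u : Bq k m} (hu : u ∈ Bgrade k m j) :
    ∀ t, lform c ^ t * u ∈ Bgrade k m (j + t)
  | 0 => by rw [pow_zero, one_mul]; exact hu
  | (t+1) => by
    rw [pow_succ', mul_assoc, ← Nat.add_assoc]
    exact lform_mul_mem (lform_pow_mul_mem hu t)

lemma Fop_mem {c : Fin m → k} {j : ℕ} {u : Bq k m} (hu : u ∈ Bgrade k m (j + 1)) :
    Fop k m c u ∈ Bgrade k m j := by
  refine Submodule.span_induction ?_ ?_ ?_ ?_ hu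
  · rintro x ⟨s, hs, rfl⟩
    have h : (bmk k m) (∏ i ∈ s, X i) = es k s := rfl
    rw [h, Fop_es]
    refine Submodule.sum_mem _ fun i hi => Submodule.smul_mem _ _ (es_mem_Bgrade ?_)
    rw [Finset.card_erase_of_mem hi, hs]
    omega
  · rw [map_zero]; exact Submodule.zero_mem _
  · intro a b _ _ ha hb; rw [map_add]; exact Submodule.add_mem _ ha hb
  · intro r a _ ha; rw [map_smul]; exact Submodule.smul_mem _ r ha

lemma Fop_grade_zero {c : Fin m → k} {u : Bq k m} (hu : u ∈ Bgrade k m 0) :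
    Fop k m c u = 0 := by
  refine Submodule.span_induction ?_ ?_ ?_ ?_ hu
  · rintro x ⟨s, hs, rfl⟩
    have h : (bmk k m) (∏ i ∈ s, X i) = es k s := rfl
    rw [h, Fop_es, Finset.card_eq_zero.mp hs, Finset.sum_empty]
  · exact map_zero _
  · intro a b _ _ ha hb; rw [map_add, ha, hb, add_zero]
  · intro r a _ ha; rw [map_smul, ha, smul_zero]

section main

variable [CharZero k] {c : Fin m → k} (hc : ∀ i, c i ≠ 0)
include hc

lemma pow_comm_grade {j : ℕ} :
    ∀ t : ℕ, ∀ u ∈ Bgrade k m j, Fop k m c (lform c ^ (t + 1) * u)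
      = lform c ^ (t + 1) * Fop k m c u
        + (((t : k) + 1) * ((m : k) - 2 * j - t)) • (lform c ^ t * u)
  | 0, u, hu => by
    have h := comm_grade hc hu
    rw [pow_one, pow_zero, one_mul, h]
    congr 1
    rw [Nat.cast_zero]
    ring_nf
  | (t+1), u, hu => by
    have h1 : lform c ^ (t + 1) * u ∈ Bgrade k m (j + (t + 1)) :=
      lform_pow_mul_mem hu (t + 1)
    have h2 := comm_grade hc h1
    have h3 := pow_comm_grade t u hu
    have hps : lform c ^ (t + 2) * u = lform c * (lform c ^ (t + 1) * u) := by
      rw [← mul_assoc, ← pow_succ']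
    rw [hps, h2, h3, mul_add, mul_smul_comm, ← mul_assoc, ← pow_succ', ← mul_assoc,
      ← pow_succ']
    rw [add_assoc, ← add_smul]
    congr 2
    push_cast
    ring

lemma vanish {j : ℕ} {u : Bq k m} (hu : u ∈ Bgrade k m j) (hF : Fop k m c u = 0) :
    ∀ t : ℕ, 2 * j + t ≤ m → lform c ^ t * u = 0 → u = 0
  | 0, _, h0 => by rwa [pow_zero, one_mul] at h0
  | (t+1), hle, h0 => by
    have h1 := pow_comm_grade hc t u hu
    rw [h0, map_zero, hF, mul_zero, zero_add] at h1
    have hcoef : ((t : k) + 1) * ((m : k) - 2 * j - t) ≠ 0 := by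
      have hlt : 2 * j + t < m := by omega
      have e1 : ((m : k) - 2 * j - t) = ((m - (2 * j + t) : ℕ) : k) := by
        rw [Nat.cast_sub (by omega)]
        push_cast
        ring
      refine mul_ne_zero ?_ ?_
      · have : ((t + 1 : ℕ) : k) ≠ 0 := Nat.cast_ne_zero.mpr (Nat.succ_ne_zero t)
        simpa using this
      · rw [e1]
        exact Nat.cast_ne_zero.mpr (by omega)
    have h2 : lform c ^ t * u = 0 := by
      have h3 := congrArg
        (fun z : Bq k m => (((t : k) + 1) * ((m : k) - 2 * j - t))⁻¹ • z) h1
      simp only [smul_zero, smul_smul, inv_mul_cancel₀ hcoef, one_smul] at h3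
      exact h3.symm
    exact vanish hu hF t (by omega) h2

lemma injective_step :
    ∀ j, 2 * j ≤ m → ∀ u ∈ Bgrade k m j, lform c ^ (m - 2 * j) * u = 0 → u = 0 := by
  intro j
  induction j with
  | zero =>
    intro hle u hu h0
    refine vanish hc hu (Fop_grade_zero hu) (m - 2 * 0) (by omega) h0
  | succ j ih =>
    intro hle u hu h0
    set n := m - 2 * (j + 1) with hn
    have hFu : Fop k m c u ∈ Bgrade k m j := Fop_mem hu
    have hpow : lform c ^ n * u = 0 := h0
    have hsucc : lform c ^ (n + 1) * u = 0 := by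
      rw [pow_succ', mul_assoc, hpow, mul_zero]
    have h1 := pow_comm_grade hc n u hu
    rw [hsucc, map_zero, hpow, smul_zero, add_zero] at h1
    have h2 : lform c ^ (m - 2 * j) * Fop k m c u = 0 := by
      have e1 : m - 2 * j = n + 2 := by omega
      rw [e1, pow_succ', mul_assoc, ← h1, mul_zero]
    have hF0 : Fop k m c u = 0 := ih (by omega) _ hFu h2
    exact vanish hc hu hF0 n (by omega) hpow

end main


lemma finiteDim : FiniteDimensional k (Bq k m) :=
  Module.Basis.finiteDimensional_of_finite (sfBasis k m)

lemma finrank_Bgrade (j : ℕ) :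
    Module.finrank k (Bgrade k m j) = m.choose j := by
  rw [Bgrade_eq]
  have li : LinearIndependent k
      (fun s : {s : Finset (Fin m) // s.card = j} => es k s.val) :=
    linearIndependent_es.comp _ Subtype.val_injective
  rw [finrank_span_eq_card li, Fintype.card_finset_len, Fintype.card_fin]

end Stmt13Aux

/-- If `g = Σ c_i x_i` with all `c_i ≠ 0` and `2j ≤ m`, then multiplication by `g^{m-2j}` is a
`k`-linear isomorphism of `B_j` onto `B_{m-j}`. -/
theorem stmt13 (k : Type*) [Field k] [CharZero k] (m j : ℕ) (hj : 2 * j ≤ m)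
    (c : Fin m → k) (hc : ∀ i, c i ≠ 0) :
    (∀ u ∈ Bgrade k m j, lform c ^ (m - 2 * j) * u ∈ Bgrade k m (m - j)) ∧
    (∀ u ∈ Bgrade k m j, ∀ v ∈ Bgrade k m j,
      lform c ^ (m - 2 * j) * u = lform c ^ (m - 2 * j) * v → u = v) ∧
    (∀ w ∈ Bgrade k m (m - j), ∃ u ∈ Bgrade k m j, lform c ^ (m - 2 * j) * u = w) := by
  classical
  open Stmt13Aux in
  haveI := finiteDim (k := k) (m := m)
  have hmem : ∀ u ∈ Bgrade k m j, lform c ^ (m - 2 * j) * u ∈ Bgrade k m (m - j) := by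
    intro u hu
    have h := Stmt13Aux.lform_pow_mul_mem (c := c) hu (m - 2 * j)
    rwa [(by omega : j + (m - 2 * j) = m - j)] at h
  have hinj : ∀ u ∈ Bgrade k m j, ∀ v ∈ Bgrade k m j,
      lform c ^ (m - 2 * j) * u = lform c ^ (m - 2 * j) * v → u = v := by
    intro u hu v hv h
    have h1 : lform c ^ (m - 2 * j) * (u - v) = 0 := by rw [mul_sub, h, sub_self]
    exact sub_eq_zero.mp
      (Stmt13Aux.injective_step hc j hj (u - v) (Submodule.sub_mem _ hu hv) h1)
  refine ⟨hmem, hinj, ?_⟩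
  have hmem' : ∀ x ∈ Bgrade k m j,
      LinearMap.mulLeft k (lform c ^ (m - 2 * j)) x ∈ Bgrade k m (m - j) := by
    intro x hx
    rw [LinearMap.mulLeft_apply]
    exact hmem x hx
  set L : Bgrade k m j →ₗ[k] Bgrade k m (m - j) :=
    (LinearMap.mulLeft k (lform c ^ (m - 2 * j))).restrict hmem' with hL
  have hLinj : Function.Injective L := by
    intro x y hxy
    have h1 : lform c ^ (m - 2 * j) * (x : Bq k m) = lform c ^ (m - 2 * j) * (y : Bq k m) := by
      have := congrArg (Subtype.val) hxy
      simp only [hL, LinearMap.restrict_apply, LinearMap.mulLeft_apply] at this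
      exact this
    exact Subtype.ext (hinj x.1 x.2 y.1 y.2 h1)
  have hdim : Module.finrank k (Bgrade k m j) = Module.finrank k (Bgrade k m (m - j)) := by
    rw [Stmt13Aux.finrank_Bgrade, Stmt13Aux.finrank_Bgrade,
      Nat.choose_symm (by omega : j ≤ m)]
  have hLsurj : Function.Surjective L :=
    (LinearMap.injective_iff_surjective_of_finrank_eq_finrank hdim).mp hLinj
  intro w hw
  obtain ⟨x, hx⟩ := hLsurj ⟨w, hw⟩
  refine ⟨x.1, x.2, ?_⟩
  have := congrArg (Subtype.val) hx
  simp only [hL, LinearMap.restrict_apply, LinearMap.mulLeft_apply] at this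
  exact this
end
end

section
/- Let $M$ be a $d$-by-$m$ matrix of rank $d$ over a field $k$ of characteristic zero, with no zero columns, and write $d_j(M) := \dim_k A_j(M)$. Then $d_0(M) \leq d_1(M) \leq \cdots \leq d_{\lfloor m/2 \rfloor}(M)$, and $d_j(M) \leq d_{m-j}(M)$ for all $0 \leq j \leq m/2$. -/
open MvPolynomial

noncomputable section

set_option maxHeartbeats 1000000
set_option synthInstance.maxHeartbeats 1000000

namespace Comb
variable {k : Type*} [Field k] {m : ℕ}

/-- Up operator with weights `c`. -/
def Uop (c : Fin m → k) : (Finset (Fin m) → k) →ₗ[k] (Finset (Fin m) → k) where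
  toFun f := fun T => ∑ i ∈ T, c i * f (T.erase i)
  map_add' f g := by
    funext T
    simp [mul_add, Finset.sum_add_distrib]
  map_smul' a f := by
    funext T
    simp [Finset.mul_sum]
    exact Finset.sum_congr rfl fun i _ => by ring

/-- Down operator with weights `c⁻¹`. -/
def Dop (c : Fin m → k) : (Finset (Fin m) → k) →ₗ[k] (Finset (Fin m) → k) where
  toFun f := fun T => ∑ i ∈ Tᶜ, (c i)⁻¹ * f (insert i T)
  map_add' f g := by
    funext T
    simp [mul_add, Finset.sum_add_distrib]
  map_smul' a f := by
    funext T
    simp [Finset.mul_sum]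
    exact Finset.sum_congr rfl fun i _ => by ring

lemma Uop_apply (c : Fin m → k) (f : Finset (Fin m) → k) (T : Finset (Fin m)) :
    Uop c f T = ∑ i ∈ T, c i * f (T.erase i) := rfl

lemma Dop_apply (c : Fin m → k) (f : Finset (Fin m) → k) (T : Finset (Fin m)) :
    Dop c f T = ∑ i ∈ Tᶜ, (c i)⁻¹ * f (insert i T) := rfl

/-- support predicate: `f` lives on level `j`. -/
def lvl (j : ℕ) (f : Finset (Fin m) → k) : Prop := ∀ S : Finset (Fin m), f S ≠ 0 → S.card = j

lemma lvl_U {c : Fin m → k} {j : ℕ} {f : Finset (Fin m) → k} (hf : lvl j f) :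
    lvl (j + 1) (Uop c f) := by
  intro S hS
  have : ∃ i ∈ S, c i * f (S.erase i) ≠ 0 := by
    by_contra h
    push_neg at h
    exact hS (Finset.sum_eq_zero h)
  obtain ⟨i, hi, hne⟩ := this
  have hfe : f (S.erase i) ≠ 0 := fun h => hne (by simp [h])
  have := hf _ hfe
  have hcard := Finset.card_erase_of_mem hi
  have : S.card - 1 = j := by rw [← hcard, this]
  have hpos : 0 < S.card := Finset.card_pos.2 ⟨i, hi⟩
  omega

lemma lvl_D {c : Fin m → k} {j : ℕ} {f : Finset (Fin m) → k} (hf : lvl j f) :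
    lvl (j - 1) (Dop c f) ∧ (j = 0 → Dop c f = 0) := by
  constructor
  · intro S hS
    have : ∃ i ∈ Sᶜ, (c i)⁻¹ * f (insert i S) ≠ 0 := by
      by_contra h
      push_neg at h
      exact hS (Finset.sum_eq_zero h)
    obtain ⟨i, hi, hne⟩ := this
    have hfe : f (insert i S) ≠ 0 := fun h => hne (by simp [h])
    have := hf _ hfe
    have hcard := Finset.card_insert_of_notMem (Finset.mem_compl.1 hi)
    omega
  · intro hj
    funext S
    show ∑ i ∈ Sᶜ, (c i)⁻¹ * f (insert i S) = 0
    refine Finset.sum_eq_zero fun i hi => ?_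
    have : f (insert i S) = 0 := by
      by_contra h
      have h1 := hf _ h
      have h2 := Finset.card_insert_of_notMem (Finset.mem_compl.1 hi)
      omega
    simp [this]

lemma comm_pointwise (c : Fin m → k) (hc : ∀ i, c i ≠ 0) (f : Finset (Fin m) → k)
    (T : Finset (Fin m)) :
    Dop c (Uop c f) T = Uop c (Dop c f) T + ((m : k) - 2 * T.card) * f T := by
  have hDU : Dop c (Uop c f) T
      = (Tᶜ.card : k) * f T + ∑ i ∈ Tᶜ, ∑ l ∈ T, (c i)⁻¹ * (c l * f (insert i (T.erase l))) := by
    rw [Dop_apply]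
    have : ∀ i ∈ Tᶜ, (c i)⁻¹ * Uop c f (insert i T)
        = f T + ∑ l ∈ T, (c i)⁻¹ * (c l * f (insert i (T.erase l))) := by
      intro i hi
      have hiT : i ∉ T := Finset.mem_compl.1 hi
      rw [Uop_apply, Finset.sum_insert hiT, Finset.erase_insert hiT, mul_add]
      congr 1
      · rw [← mul_assoc, inv_mul_cancel₀ (hc i), one_mul]
      · rw [Finset.mul_sum]
        refine Finset.sum_congr rfl fun l hl => ?_
        rw [Finset.erase_insert_of_ne (by rintro rfl; exact hiT hl)]
    rw [Finset.sum_congr rfl this, Finset.sum_add_distrib, Finset.sum_const, nsmul_eq_mul]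
  have hUD : Uop c (Dop c f) T
      = (T.card : k) * f T + ∑ l ∈ T, ∑ i ∈ Tᶜ, c l * ((c i)⁻¹ * f (insert i (T.erase l))) := by
    rw [Uop_apply]
    have : ∀ l ∈ T, c l * Dop c f (T.erase l)
        = f T + ∑ i ∈ Tᶜ, c l * ((c i)⁻¹ * f (insert i (T.erase l))) := by
      intro l hl
      rw [Dop_apply, Finset.compl_erase, Finset.sum_insert (by simp [hl]),
        Finset.insert_erase hl, mul_add]
      congr 1
      · rw [← mul_assoc, mul_inv_cancel₀ (hc l), one_mul]
      · rw [Finset.mul_sum]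
    rw [Finset.sum_congr rfl this, Finset.sum_add_distrib, Finset.sum_const, nsmul_eq_mul]
  rw [hDU, hUD, Finset.sum_comm]
  have : ∀ l ∈ T, ∀ i ∈ Tᶜ, (c i)⁻¹ * (c l * f (insert i (T.erase l)))
      = c l * ((c i)⁻¹ * f (insert i (T.erase l))) := by intros; ring
  rw [Finset.sum_congr rfl fun l hl => Finset.sum_congr rfl fun i hi => this l hl i hi]
  have hcard : (Tᶜ.card : k) = (m : k) - T.card := by
    have h1 : Tᶜ.card = m - T.card := by
      rw [Finset.card_compl]; simp
    have h2 : T.card ≤ m := by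
      simpa using Finset.card_le_card (Finset.subset_univ T)
    rw [h1, Nat.cast_sub h2]
  rw [hcard]; ring

lemma comm_lvl (c : Fin m → k) (hc : ∀ i, c i ≠ 0) {j : ℕ} {f : Finset (Fin m) → k}
    (hf : lvl j f) :
    Dop c (Uop c f) = Uop c (Dop c f) + ((m : k) - 2 * j) • f := by
  funext T
  rw [Pi.add_apply, Pi.smul_apply, smul_eq_mul, comm_pointwise c hc]
  by_cases h : f T = 0
  · rw [h]; ring
  · rw [hf T h]

lemma lvl_Upow (c : Fin m → k) {j : ℕ} {f : Finset (Fin m) → k} (hf : lvl j f) (s : ℕ) :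
    lvl (j + s) ((Uop c ^ s) f) := by
  induction s with
  | zero => simpa using hf
  | succ n ih =>
      have : (Uop c ^ (n + 1)) f = Uop c ((Uop c ^ n) f) := by
        rw [pow_succ' (Uop c) n]; rfl
      rw [this, ← Nat.add_assoc]
      exact lvl_U ih

lemma comm_iter (c : Fin m → k) (hc : ∀ i, c i ≠ 0) {j : ℕ} {f : Finset (Fin m) → k}
    (hf : lvl j f) (s : ℕ) (hs : 1 ≤ s) :
    Dop c ((Uop c ^ s) f) = (Uop c ^ s) (Dop c f)
      + ((s : k) * ((m : k) - 2 * j - s + 1)) • (Uop c ^ (s - 1)) f := by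
  induction s with
  | zero => omega
  | succ n ih =>
      rcases Nat.eq_or_lt_of_le hs with h1 | h2
      · -- n + 1 = 1, i.e. n = 0
        have hn : n = 0 := by omega
        subst hn
        have h0 := comm_lvl c hc hf
        have e1 : (Uop c ^ 1) = Uop c := pow_one _
        simp only [e1, pow_zero, Module.End.one_apply]
        rw [h0]
        norm_num
      · have hn : 1 ≤ n := by omega
        have hUf : (Uop c ^ (n + 1)) f = Uop c ((Uop c ^ n) f) := by
          rw [pow_succ' (Uop c) n]; rfl
        have hlvl : lvl (j + n) ((Uop c ^ n) f) := lvl_Upow c hf n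
        rw [hUf, comm_lvl c hc hlvl, ih hn, map_add, map_smul]
        have hUDf : Uop c ((Uop c ^ n) (Dop c f)) = (Uop c ^ (n + 1)) (Dop c f) := by
          rw [pow_succ' (Uop c) n]; rfl
        have hUn : Uop c ((Uop c ^ (n - 1)) f) = (Uop c ^ n) f := by
          conv_rhs => rw [show n = (n - 1) + 1 by omega]
          rw [pow_succ' (Uop c) (n-1)]; rfl
        rw [hUDf, hUn]
        rw [add_assoc]
        congr 1
        rw [Nat.add_sub_cancel, ← add_smul]
        congr 1
        push_cast
        ring

theorem Upow_inj [CharZero k] (c : Fin m → k) (hc : ∀ i, c i ≠ 0) :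
    ∀ (n j r : ℕ), 2 * j + r = n → 2 * j + r ≤ m →
      ∀ f : Finset (Fin m) → k, lvl j f → (Uop c ^ r) f = 0 → f = 0 := by
  intro n
  induction n using Nat.strong_induction_on with
  | _ n IH =>
    intro j r hn hm f hf hU
    rcases Nat.eq_zero_or_pos r with hr | hr
    · subst hr; simpa using hU
    · -- key identity
      have hkey := comm_iter c hc hf r hr
      rw [hU, map_zero] at hkey
      set γ : k := (r : k) * ((m : k) - 2 * j - r + 1) with hγ
      have hγne : γ ≠ 0 := by
        have hr0 : (r : k) ≠ 0 := Nat.cast_ne_zero.2 (by omega)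
        have ha : ((m - (2 * j + r) + 1 : ℕ) : k) = (m : k) - 2 * j - r + 1 := by
          rw [Nat.cast_add, Nat.cast_sub hm]
          push_cast
          ring
        rw [hγ, ← ha]
        exact mul_ne_zero hr0 (Nat.cast_ne_zero.2 (by omega))
      -- show D f = 0
      have hDf : Dop c f = 0 := by
        rcases Nat.eq_zero_or_pos j with hj | hj
        · exact (lvl_D hf).2 hj
        · have hlvlD : lvl (j - 1) (Dop c f) := (lvl_D hf).1
          have hUr1 : (Uop c ^ (r + 1)) (Dop c f) = 0 := by
            have : (Uop c ^ r) (Dop c f) = -(γ • (Uop c ^ (r - 1)) f) :=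
              eq_neg_of_add_eq_zero_left hkey.symm
            have h2 : (Uop c ^ (r + 1)) (Dop c f) = Uop c ((Uop c ^ r) (Dop c f)) := by
              rw [pow_succ' (Uop c)]; rfl
            rw [h2, this, map_neg, map_smul]
            have h3 : Uop c ((Uop c ^ (r - 1)) f) = (Uop c ^ r) f := by
              conv_rhs => rw [show r = (r - 1) + 1 by omega]
              rw [pow_succ' (Uop c)]; rfl
            rw [h3, hU, smul_zero, neg_zero]
          exact IH (n - 1) (by omega) (j - 1) (r + 1) (by omega) (by omega) _ hlvlD hUr1
      rw [hDf, map_zero, zero_add] at hkey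
      have hUr1f : (Uop c ^ (r - 1)) f = 0 :=
        (smul_eq_zero.1 hkey.symm).resolve_left hγne
      exact IH (n - 1) (by omega) j (r - 1) (by omega) (by omega) f hf hUr1f

end Comb

namespace SB
variable {k : Type*} [Field k] {m : ℕ}

/-- exponent of squarefree monomial -/
def sfExp (S : Finset (Fin m)) : Fin m →₀ ℕ := ∑ i ∈ S, Finsupp.single i 1

lemma sfExp_apply (S : Finset (Fin m)) (i : Fin m) :
    sfExp S i = if i ∈ S then 1 else 0 := by
  classical
  rw [sfExp, Finset.sum_apply']
  by_cases h : i ∈ S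
  · rw [Finset.sum_eq_single i (fun b _ hb => Finsupp.single_eq_of_ne' hb) (fun h' => absurd h h')]
    simp [h]
  · rw [Finset.sum_eq_zero fun b hb => Finsupp.single_eq_of_ne' (by rintro rfl; exact h hb)]
    simp [h]

lemma sfExp_le_one (S : Finset (Fin m)) (i : Fin m) : sfExp S i ≤ 1 := by
  rw [sfExp_apply]; split <;> omega

lemma sfExp_inj : Function.Injective (sfExp (m := m)) := by
  intro S T h
  ext i
  have := DFunLike.congr_fun h i
  simp only [sfExp_apply] at this
  by_cases hS : i ∈ S <;> by_cases hT : i ∈ T <;> simp [hS, hT] at this ⊢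

lemma sfExp_support (S : Finset (Fin m)) : (sfExp S).support = S := by
  ext i
  simp [Finsupp.mem_support_iff, sfExp_apply]

lemma eq_sfExp_of_squarefree {μ : Fin m →₀ ℕ} (h : ∀ i, μ i ≤ 1) : μ = sfExp μ.support := by
  ext i
  rw [sfExp_apply]
  by_cases hi : i ∈ μ.support
  · have := Finsupp.mem_support_iff.1 hi
    have := h i
    simp only [hi, if_true]
    omega
  · have := Finsupp.notMem_support_iff.1 hi
    simp [hi, this]

lemma prod_X_eq (S : Finset (Fin m)) :
    (∏ i ∈ S, X i : MvPolynomial (Fin m) k) = monomial (sfExp S) 1 := by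
  classical
  induction S using Finset.induction_on with
  | empty => simp [sfExp]
  | @insert a s h ih =>
      have hs : sfExp (insert a s) = Finsupp.single a 1 + sfExp s := by
        rw [sfExp, sfExp, Finset.sum_insert h]
      rw [Finset.prod_insert h, ih, hs,
        show (X a : MvPolynomial (Fin m) k) = monomial (Finsupp.single a 1) 1 from rfl,
        monomial_mul, one_mul]

lemma monomial_mem_sqIdeal {μ : Fin m →₀ ℕ} {r : k} (i : Fin m) (h : 2 ≤ μ i) :
    monomial μ r ∈ sqIdeal k m := by
  have hμ : (μ - Finsupp.single i 2) + Finsupp.single i 2 = μ := by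
    ext l
    by_cases hl : l = i
    · subst hl
      simp only [Finsupp.add_apply, Finsupp.tsub_apply, Finsupp.single_apply, if_pos rfl,
        ite_true]
      omega
    · simp [Finsupp.add_apply, Finsupp.tsub_apply, Finsupp.single_apply, Ne.symm hl]
  have key : monomial μ r
      = monomial (μ - Finsupp.single i 2) r * (X i) ^ 2 := by
    rw [X_pow_eq_monomial, monomial_mul, mul_one, hμ]
  rw [key]
  exact Ideal.mul_mem_left _ _ (Ideal.subset_span ⟨i, rfl⟩)

lemma coeff_sfExp_eq_zero {p : MvPolynomial (Fin m) k} (hp : p ∈ sqIdeal k m) :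
    ∀ S : Finset (Fin m), coeff (sfExp S) p = 0 := by
  induction hp using Submodule.span_induction with
  | mem x hx =>
      intro S
      obtain ⟨i, rfl⟩ := hx
      show coeff (sfExp S) ((X i : MvPolynomial (Fin m) k) ^ 2) = 0
      rw [X_pow_eq_monomial, coeff_monomial]
      have : ¬ (Finsupp.single i 2 = sfExp S) := by
        intro h
        have := DFunLike.congr_fun h i
        simp at this
        have := sfExp_le_one S i
        omega
      simp [this]
  | zero => simp
  | add x y hx hy ihx ihy => intro S; simp [ihx, ihy]
  | smul a x hx ih =>
      intro S
      rw [smul_eq_mul, coeff_mul]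
      refine Finset.sum_eq_zero fun z hz => ?_
      rw [Finset.HasAntidiagonal.mem_antidiagonal] at hz
      have hle : ∀ i, z.2 i ≤ 1 := by
        intro i
        have h1 : z.1 i + z.2 i = sfExp S i := by
          rw [← hz]; rfl
        have := sfExp_le_one S i
        omega
      have h2 : z.2 = sfExp z.2.support := eq_sfExp_of_squarefree hle
      rw [h2, ih, mul_zero]

def delta (k : Type*) [Field k] {m : ℕ} (S : Finset (Fin m)) : Finset (Fin m) → k :=
  Pi.single S 1

/-- basis vectors of `Bq`. -/
def sfB (k : Type*) [Field k] {m : ℕ} (S : Finset (Fin m)) : Bq k m :=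
  bmk k m (∏ i ∈ S, X i)

lemma bmk_eq_zero_iff {p : MvPolynomial (Fin m) k} : bmk k m p = 0 ↔ p ∈ sqIdeal k m := by
  rw [bmk, Ideal.Quotient.mkₐ_eq_mk, Ideal.Quotient.eq_zero_iff_mem]

lemma mk_eq_sum (p : MvPolynomial (Fin m) k) :
    bmk k m p = ∑ S : Finset (Fin m), coeff (sfExp S) p • sfB k S := by
  induction p using MvPolynomial.induction_on' with
  | monomial μ r =>
      by_cases h : ∀ i, μ i ≤ 1
      · have hμ : μ = sfExp μ.support := eq_sfExp_of_squarefree h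
        have hL : bmk k m (monomial μ r) = r • sfB k μ.support := by
          rw [sfB, prod_X_eq, ← map_smul, smul_monomial, smul_eq_mul, mul_one, ← hμ]
        rw [hL, Finset.sum_eq_single μ.support]
        · rw [coeff_monomial, if_pos hμ]
        · intro T _ hT
          rw [coeff_monomial, if_neg, zero_smul]
          intro hc
          exact hT (sfExp_inj (by rw [← hc]; exact hμ))
        · intro h'
          exact absurd (Finset.mem_univ _) h'
      · push_neg at h
        obtain ⟨i, hi⟩ := h
        have hL : bmk k m (monomial μ r) = 0 :=
          bmk_eq_zero_iff.2 (monomial_mem_sqIdeal i hi)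
        rw [hL, eq_comm]
        refine Finset.sum_eq_zero fun S _ => ?_
        rw [coeff_monomial, if_neg, zero_smul]
        intro hc
        have := DFunLike.congr_fun hc i
        have := sfExp_le_one S i
        omega
  | add p q ihp ihq =>
      rw [map_add, ihp, ihq, ← Finset.sum_add_distrib]
      refine Finset.sum_congr rfl fun S _ => ?_
      rw [coeff_add, add_smul]

/-- The structural linear map from functions on subsets to `Bq`. -/
def Phi (k : Type*) [Field k] (m : ℕ) : (Finset (Fin m) → k) →ₗ[k] Bq k m where
  toFun f := ∑ S : Finset (Fin m), f S • sfB k S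
  map_add' f g := by simp [add_smul, Finset.sum_add_distrib]
  map_smul' a f := by simp [Finset.smul_sum, smul_smul]

lemma Phi_apply (f : Finset (Fin m) → k) : Phi k m f = ∑ S : Finset (Fin m), f S • sfB k S :=
  rfl

lemma Phi_single (S : Finset (Fin m)) :
    Phi k m (delta k S) = sfB k S := by
  rw [delta, Phi_apply, Finset.sum_eq_single S]
  · rw [Pi.single_eq_same, one_smul]
  · intro T _ hT
    rw [Pi.single_eq_of_ne hT, zero_smul]
  · intro h; exact absurd (Finset.mem_univ _) h

lemma Phi_surjective : Function.Surjective (Phi k m) := by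
  intro x
  obtain ⟨p, rfl⟩ := Ideal.Quotient.mkₐ_surjective k (sqIdeal k m) x
  exact ⟨fun S => coeff (sfExp S) p, (mk_eq_sum p).symm⟩

lemma Phi_injective : Function.Injective (Phi k m) := by
  rw [injective_iff_map_eq_zero]
  intro f hf
  set q : MvPolynomial (Fin m) k := ∑ S : Finset (Fin m), f S • monomial (sfExp S) 1 with hq
  have hbq : bmk k m q = Phi k m f := by
    rw [hq, map_sum]
    refine Finset.sum_congr rfl fun S _ => ?_
    rw [map_smul, sfB, prod_X_eq]
  have hqmem : q ∈ sqIdeal k m := by rw [← bmk_eq_zero_iff, hbq, hf]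
  have hcoeff := coeff_sfExp_eq_zero hqmem
  funext T
  have hcT : coeff (sfExp T) q = f T := by
    rw [hq, MvPolynomial.coeff_sum, Finset.sum_eq_single T]
    · rw [coeff_smul, coeff_monomial, if_pos rfl, smul_eq_mul, mul_one]
    · intro S _ hS
      rw [coeff_smul, coeff_monomial, if_neg (fun hc => hS (sfExp_inj hc)), smul_zero]
    · intro h; exact absurd (Finset.mem_univ _) h
  show f T = 0
  rw [← hcT, hcoeff T]

lemma lform_eq_sum (c : Fin m → k) : lform c = ∑ j, c j • sfB k ({j} : Finset (Fin m)) := by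
  rw [lform, map_sum]
  refine Finset.sum_congr rfl fun j _ => ?_
  rw [sfB, Finset.prod_singleton, ← smul_eq_C_mul, map_smul]

lemma mul_sfB (c : Fin m → k) (S : Finset (Fin m)) :
    lform c * sfB k S = ∑ i ∈ Sᶜ, c i • sfB k (insert i S) := by
  rw [lform_eq_sum, Finset.sum_mul]
  rw [← Finset.sum_add_sum_compl S (fun j => (c j • sfB k {j}) * sfB k S)]
  have hS : ∀ j ∈ S, (c j • sfB k ({j} : Finset (Fin m))) * sfB k S = 0 := by
    intro j hj
    rw [smul_mul_assoc]
    have : sfB k ({j} : Finset (Fin m)) * sfB k S = 0 := by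
      rw [sfB, sfB, ← map_mul, bmk_eq_zero_iff, Finset.prod_singleton,
        ← Finset.insert_erase hj, Finset.prod_insert (Finset.notMem_erase j S), ← mul_assoc,
        ← sq]
      exact Ideal.mul_mem_right _ _ (Ideal.subset_span ⟨j, rfl⟩)
    rw [this, smul_zero]
  rw [Finset.sum_eq_zero hS, zero_add]
  refine Finset.sum_congr rfl fun i hi => ?_
  have hiS : i ∉ S := Finset.mem_compl.1 hi
  rw [smul_mul_assoc, sfB, sfB, sfB, ← map_mul, Finset.prod_singleton,
    ← Finset.prod_insert hiS]

lemma Uop_single (c : Fin m → k) (S : Finset (Fin m)) :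
    Comb.Uop c (delta k S) = ∑ i ∈ Sᶜ, c i • delta k (insert i S) := by
  funext T
  show (∑ i ∈ T, c i * delta k S (T.erase i))
    = (∑ i ∈ Sᶜ, c i • delta k (insert i S)) T
  rw [Finset.sum_apply]
  have hL : ∀ i ∈ T, c i * delta k S (T.erase i)
      = if i ∈ T ∧ T.erase i = S then c i else 0 := by
    intro i hi
    rw [delta, Pi.single_apply]
    by_cases h : T.erase i = S <;> simp [h, hi]
  have hR : ∀ i ∈ Sᶜ, (c i • delta k (insert i S)) T
      = if i ∉ S ∧ T = insert i S then c i else 0 := by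
    intro i hi
    have hiS : i ∉ S := Finset.mem_compl.1 hi
    rw [Pi.smul_apply, delta, Pi.single_apply, smul_eq_mul]
    by_cases h : T = insert i S <;> simp [h, hiS]
  rw [Finset.sum_congr rfl hL, Finset.sum_congr rfl hR]
  have key : ∀ i : Fin m, (if i ∈ T ∧ T.erase i = S then c i else 0)
      = (if i ∉ S ∧ T = insert i S then c i else 0) := by
    intro i
    by_cases h1 : i ∈ T ∧ T.erase i = S
    · obtain ⟨hiT, hS⟩ := h1
      have h2 : i ∉ S ∧ T = insert i S :=
        ⟨hS ▸ Finset.notMem_erase i T, by rw [← hS, Finset.insert_erase hiT]⟩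
      simp [hiT, hS, h2.1, h2.2]
    · have h2 : ¬ (i ∉ S ∧ T = insert i S) := by
        rintro ⟨hiS, rfl⟩
        exact h1 ⟨Finset.mem_insert_self i S, Finset.erase_insert hiS⟩
      simp only [if_neg h1, if_neg h2]
  rw [show (∑ i ∈ T, if i ∈ T ∧ T.erase i = S then c i else 0)
      = ∑ i : Fin m, if i ∈ T ∧ T.erase i = S then c i else 0 from
    Finset.sum_subset (Finset.subset_univ T) (fun i _ hi => by simp [hi])]
  rw [show (∑ i ∈ Sᶜ, if i ∉ S ∧ T = insert i S then c i else 0)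
      = ∑ i : Fin m, if i ∉ S ∧ T = insert i S then c i else 0 from
    Finset.sum_subset (Finset.subset_univ Sᶜ)
      (fun i _ hi => by simp at hi; simp [hi])]
  exact Finset.sum_congr rfl fun i _ => key i

lemma eq_sum_delta (f : Finset (Fin m) → k) : f = ∑ S : Finset (Fin m), f S • delta k S := by
  funext T
  rw [Finset.sum_apply, Finset.sum_eq_single T]
  · rw [Pi.smul_apply, delta, Pi.single_eq_same, smul_eq_mul, mul_one]
  · intro S _ hS
    rw [Pi.smul_apply, delta, Pi.single_eq_of_ne (Ne.symm hS), smul_zero]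
  · intro h; exact absurd (Finset.mem_univ _) h

lemma Phi_Uop (c : Fin m → k) (f : Finset (Fin m) → k) :
    Phi k m (Comb.Uop c f) = lform c * Phi k m f := by
  conv_lhs => rw [eq_sum_delta f]
  conv_rhs => rw [eq_sum_delta f]
  rw [map_sum, map_sum, map_sum, Finset.mul_sum]
  refine Finset.sum_congr rfl fun S _ => ?_
  rw [map_smul, map_smul, map_smul, Uop_single, Phi_single, mul_smul_comm, mul_sfB, map_sum]
  rw [Finset.smul_sum, Finset.smul_sum]
  refine Finset.sum_congr rfl fun i _ => ?_
  rw [map_smul, Phi_single, smul_comm]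

lemma Phi_Uop_pow (c : Fin m → k) (r : ℕ) (f : Finset (Fin m) → k) :
    Phi k m ((Comb.Uop c ^ r) f) = (lform c) ^ r * Phi k m f := by
  induction r with
  | zero => simp
  | succ n ih =>
      have h1 : (Comb.Uop c ^ (n+1)) f = Comb.Uop c ((Comb.Uop c ^ n) f) := by
        rw [pow_succ' (Comb.Uop c)]; rfl
      rw [h1, Phi_Uop, ih, pow_succ' (lform c), mul_assoc]

/-- The equivalence. -/
def PhiE (k : Type*) [Field k] (m : ℕ) : (Finset (Fin m) → k) ≃ₗ[k] Bq k m :=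
  LinearEquiv.ofBijective (Phi k m) ⟨Phi_injective, Phi_surjective⟩

lemma lvl_of_mem_Bgrade {j : ℕ} {x : Bq k m} (hx : x ∈ Bgrade k m j) :
    Comb.lvl j ((PhiE k m).symm x) := by
  induction hx using Submodule.span_induction with
  | mem y hy =>
      obtain ⟨S, hcard, rfl⟩ := hy
      have : (PhiE k m).symm (sfB k S) = delta k S := by
        rw [LinearEquiv.symm_apply_eq]
        exact (Phi_single S).symm
      rw [show bmk k m (∏ i ∈ S, X i) = sfB k S from rfl, this]
      intro T hT
      by_cases h : T = S
      · rw [h]; exact hcard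
      · exact absurd (by rw [delta, Pi.single_eq_of_ne h] : delta k S T = 0) hT
  | zero =>
      rw [(PhiE k m).symm.map_zero]
      intro T hT
      exact absurd rfl hT
  | add x y hx hy ihx ihy =>
      rw [(PhiE k m).symm.map_add]
      intro T hT
      rcases (by by_contra hcon; push_neg at hcon; simp [hcon.1, hcon.2] at hT :
        (PhiE k m).symm x T ≠ 0 ∨ (PhiE k m).symm y T ≠ 0) with h | h
      · exact ihx T h
      · exact ihy T h
  | smul a x hx ih =>
      rw [(PhiE k m).symm.map_smul]
      intro T hT
      refine ih T fun h => hT ?_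
      rw [Pi.smul_apply, h, smul_zero]

lemma mul_mem_Bgrade {j : ℕ} {x : Bq k m} (c : Fin m → k) (hx : x ∈ Bgrade k m j) :
    lform c * x ∈ Bgrade k m (j + 1) := by
  induction hx using Submodule.span_induction with
  | mem y hy =>
      obtain ⟨S, hcard, rfl⟩ := hy
      rw [show bmk k m (∏ i ∈ S, X i) = sfB k S from rfl, mul_sfB]
      refine Submodule.sum_mem _ fun i hi => Submodule.smul_mem _ _ (Submodule.subset_span ?_)
      exact ⟨insert i S, by
        rw [Finset.card_insert_of_notMem (Finset.mem_compl.1 hi), hcard], rfl⟩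
  | zero => rw [mul_zero]; exact Submodule.zero_mem _
  | add x y hx hy ihx ihy => rw [mul_add]; exact Submodule.add_mem _ ihx ihy
  | smul a x hx ih => rw [mul_smul_comm]; exact Submodule.smul_mem _ _ ih

lemma pow_mul_mem_Bgrade {j : ℕ} {x : Bq k m} (c : Fin m → k) (r : ℕ) (hx : x ∈ Bgrade k m j) :
    (lform c) ^ r * x ∈ Bgrade k m (j + r) := by
  induction r with
  | zero => simpa using hx
  | succ n ih =>
      have : (lform c) ^ (n+1) * x = lform c * ((lform c) ^ n * x) := by
        rw [pow_succ' (lform c)]; ring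
      rw [this, ← Nat.add_assoc]
      exact mul_mem_Bgrade c ih

theorem key_injective [CharZero k] (c : Fin m → k) (hc : ∀ i, c i ≠ 0) {j r : ℕ}
    (hjr : 2 * j + r ≤ m) {x : Bq k m} (hx : x ∈ Bgrade k m j)
    (hzero : (lform c) ^ r * x = 0) : x = 0 := by
  set f := (PhiE k m).symm x with hf
  have hlvl : Comb.lvl j f := lvl_of_mem_Bgrade hx
  have hPhif : Phi k m f = x := by
    rw [hf]
    exact (PhiE k m).apply_symm_apply x
  have hU : Phi k m ((Comb.Uop c ^ r) f) = 0 := by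
    rw [Phi_Uop_pow, hPhif, hzero]
  have hU0 : (Comb.Uop c ^ r) f = 0 := by
    apply Phi_injective
    rw [hU, (Phi k m).map_zero]
  have hf0 : f = 0 := Comb.Upow_inj c hc (2*j+r) j r rfl hjr f hlvl hU0
  rw [← hPhif, hf0, (Phi k m).map_zero]

instance : FiniteDimensional k (Bq k m) :=
  Module.Finite.equiv (PhiE k m)

/-- row-space linear forms belong to `Asub`. -/
lemma lform_comb_mem {d : ℕ} (M : Matrix (Fin d) (Fin m) k) (t : Fin d → k) :
    lform (fun j => ∑ i, t i * M i j) ∈ Asub k M := by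
  have key : lform (fun j => ∑ i, t i * M i j) = ∑ i, t i • lform (M i) := by
    rw [lform_eq_sum]
    rw [show (∑ i, t i • lform (M i)) = ∑ i, ∑ j, (t i * M i j) • sfB k {j} from
      Finset.sum_congr rfl fun i _ => by
        rw [lform_eq_sum (M i), Finset.smul_sum]
        exact Finset.sum_congr rfl fun j _ => (smul_smul _ _ _)]
    rw [Finset.sum_comm]
    refine Finset.sum_congr rfl fun j _ => ?_
    rw [← Finset.sum_smul]
  rw [key]
  exact Subalgebra.sum_mem _ fun i _ =>
    Subalgebra.smul_mem _ (Algebra.subset_adjoin (Set.mem_range_self i)) _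

/-- existence of a row-space vector with all coordinates nonzero -/
lemma exists_good_comb [CharZero k] {d : ℕ} (M : Matrix (Fin d) (Fin m) k)
    (hcol : ∀ j, ∃ i, M i j ≠ 0) :
    ∃ t : Fin d → k, ∀ j, (∑ i, t i * M i j) ≠ 0 := by
  set P : MvPolynomial (Fin d) k := ∏ j, (∑ i, C (M i j) * X i) with hP
  have hfac : ∀ j : Fin m, (∑ i, C (M i j) * X i : MvPolynomial (Fin d) k) ≠ 0 := by
    intro j
    obtain ⟨i0, hi0⟩ := hcol j
    intro hzero
    have : coeff (Finsupp.single i0 1) (∑ i, C (M i j) * X i : MvPolynomial (Fin d) k)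
        = M i0 j := by
      rw [MvPolynomial.coeff_sum]
      rw [Finset.sum_eq_single i0]
      · rw [C_mul_X_eq_monomial, coeff_monomial, if_pos rfl]
      · intro i _ hi
        rw [C_mul_X_eq_monomial, coeff_monomial,
          if_neg (fun h => hi (by
            have := Finsupp.single_left_injective (α := Fin d) one_ne_zero h
            exact this))]
      · intro h; exact absurd (Finset.mem_univ _) h
    rw [hzero] at this
    simp at this
    exact hi0 this.symm
  have hPne : P ≠ 0 := Finset.prod_ne_zero_iff.2 fun j _ => hfac j
  have : ¬ ∀ t : Fin d → k, eval t P = 0 := by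
    intro h
    exact hPne (MvPolynomial.funext (fun t => by rw [h t, map_zero]))
  push_neg at this
  obtain ⟨t, ht⟩ := this
  refine ⟨t, fun j => ?_⟩
  intro hj
  apply ht
  rw [hP, map_prod]
  refine Finset.prod_eq_zero (Finset.mem_univ j) ?_
  rw [map_sum, ← hj]
  refine Finset.sum_congr rfl fun i _ => ?_
  rw [map_mul, eval_C, eval_X, mul_comm]

lemma finrank_le_step [CharZero k] {d : ℕ} (M : Matrix (Fin d) (Fin m) k)
    (hcol : ∀ j, ∃ i, M i j ≠ 0) (j r : ℕ) (h : 2 * j + r ≤ m) :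
    Module.finrank k ↥(Aj k M j) ≤ Module.finrank k ↥(Aj k M (j + r)) := by
  obtain ⟨t, ht⟩ := exists_good_comb M hcol
  set c : Fin m → k := fun j => ∑ i, t i * M i j with hc
  have hlmem : lform c ∈ Asub k M := lform_comb_mem M t
  set ℓ : Bq k m := lform c with hℓ
  have hmap : ∀ x ∈ Aj k M j, ℓ ^ r * x ∈ Aj k M (j + r) := by
    intro x hx
    refine ⟨?_, pow_mul_mem_Bgrade c r hx.2⟩
    exact (Subalgebra.mem_toSubmodule _).2
      (mul_mem (pow_mem hlmem r) ((Subalgebra.mem_toSubmodule _).1 hx.1))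
  set F : Bq k m →ₗ[k] Bq k m := LinearMap.mulLeft k (ℓ ^ r) with hF
  have hmap' : ∀ x ∈ Aj k M j, F x ∈ Aj k M (j + r) := hmap
  set g : ↥(Aj k M j) →ₗ[k] ↥(Aj k M (j + r)) := F.restrict hmap' with hg
  have hginj : Function.Injective g := by
    rw [injective_iff_map_eq_zero]
    intro z hz
    have hzv : ℓ ^ r * (z : Bq k m) = 0 := by
      have := congrArg (Subtype.val) hz
      simpa [hg, LinearMap.restrict_apply, hF] using this
    have := key_injective c ht h z.2.2 hzv
    exact Subtype.ext this
  exact LinearMap.finrank_le_finrank_of_injective hginj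

theorem main [CharZero k] {d : ℕ} (M : Matrix (Fin d) (Fin m) k)
    (hcol : ∀ j, ∃ i, M i j ≠ 0) :
    (∀ j : ℕ, j + 1 ≤ m / 2 →
      Module.finrank k ↥(Aj k M j) ≤ Module.finrank k ↥(Aj k M (j + 1))) ∧
    (∀ j : ℕ, 2 * j ≤ m →
      Module.finrank k ↥(Aj k M j) ≤ Module.finrank k ↥(Aj k M (m - j))) := by
  constructor
  · intro j hj
    exact finrank_le_step M hcol j 1 (by omega)
  · intro j hj
    have : m - j = j + (m - 2 * j) := by omega
    rw [this]
    exact finrank_le_step M hcol j (m - 2 * j) (by omega)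

end SB

/-- The Hilbert function of `A(M)` is nondecreasing up to degree `⌊m/2⌋`, and
`d_j(M) ≤ d_{m-j}(M)` for `0 ≤ j ≤ m/2`. -/
theorem stmt16 (k : Type*) [Field k] [CharZero k] (d m : ℕ)
    (M : Matrix (Fin d) (Fin m) k) (hrk : M.rank = d) (hcol : ∀ j, ∃ i, M i j ≠ 0) :
    (∀ j : ℕ, j + 1 ≤ m / 2 →
      Module.finrank k ↥(Aj k M j) ≤ Module.finrank k ↥(Aj k M (j + 1))) ∧
    (∀ j : ℕ, 2 * j ≤ m →
      Module.finrank k ↥(Aj k M j) ≤ Module.finrank k ↥(Aj k M (m - j))) := by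
  exact SB.main M hcol
end
end
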